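/- arXiv:1912.00671 — 10 statements merged into one kernel-verified Lean document; each statement's English description precedes it below -/
import Mathlib

section
/- Let H, H1, H2 be Hilbert spaces and A : H1 → H, B : H2 → H bounded linear operators with ran A ⊆ ran B. Then Q := B† A : H1 → H2 (where B† is the Moore–Penrose pseudo-inverse of B) is a well-defined bounded linear operator, and it is the unique operator satisfying A = B Q, ker Q = ker A, and ran Q ⊆ closure(ran B*). -/
/-!
Since `ker B` is closed, `B` is injective on `(ker B)ᗮ` and has the same range there as on all
of `H2`. So each `A x` has exactly one `B`-preimage in `(ker B)ᗮ`, namely `B† (A x)`. The map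
`x ↦ B† (A x)` is linear by this uniqueness and bounded by the closed graph theorem. Finally
`closure (ran B*) = (ker B)ᗮ`, so any `Q` as in the statement takes values in `(ker B)ᗮ` and
is therefore pinned down by `B Q = A`.
-/

section InjectiveFactor

variable {𝕜 E F G : Type*} [NontriviallyNormedField 𝕜]
  [NormedAddCommGroup E] [NormedSpace 𝕜 E] [CompleteSpace E]
  [NormedAddCommGroup F] [NormedSpace 𝕜 F] [CompleteSpace F]
  [NormedAddCommGroup G] [NormedSpace 𝕜 G]

theorem ContinuousLinearMap.exists_comp_eq_of_injective_of_range_subset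
    (A : E →L[𝕜] G) {B : F →L[𝕜] G} (hB : Function.Injective B)
    (hAB : Set.range A ⊆ Set.range B) : ∃ T : E →L[𝕜] F, B ∘L T = A := by
  let e := LinearEquiv.ofInjective (B : F →ₗ[𝕜] G) hB
  let T : E →ₗ[𝕜] F := e.symm ∘ₗ (A : E →ₗ[𝕜] G).codRestrict (LinearMap.range (B : F →ₗ[𝕜] G))
    (fun x => hAB ⟨x, rfl⟩)
  have hBT : ∀ x, B (T x) = A x := fun x => congrArg Subtype.val (e.apply_symm_apply _)
  have hT : Continuous T := T.continuous_of_seq_closed_graph fun u x y hu hTu => hB <| by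
    rw [hBT]
    refine tendsto_nhds_unique ((B.continuous.tendsto y).comp hTu) ?_
    simpa only [Function.comp_def, hBT] using (A.continuous.tendsto x).comp hu
  exact ⟨⟨T, hT⟩, ContinuousLinearMap.ext hBT⟩

end InjectiveFactor

section Orthogonal

variable {𝕜 E F : Type*} [RCLike 𝕜]
  [NormedAddCommGroup E] [InnerProductSpace 𝕜 E] [NormedAddCommGroup F] [InnerProductSpace 𝕜 F]

theorem LinearMap.injOn_orthogonal_ker (B : E →ₗ[𝕜] F) : Set.InjOn B (LinearMap.ker B)ᗮ :=
  LinearMap.disjoint_ker_iff_injOn.mp (LinearMap.ker B).orthogonal_disjoint.symm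

theorem LinearMap.range_comp_subtype_orthogonal_ker (B : E →ₗ[𝕜] F)
    [(LinearMap.ker B).HasOrthogonalProjection] :
    LinearMap.range (B ∘ₗ (LinearMap.ker B)ᗮ.subtype) = LinearMap.range B := by
  rw [LinearMap.range_comp, Submodule.range_subtype, ← Submodule.map_top,
    ← (LinearMap.ker B).sup_orthogonal_of_hasOrthogonalProjection, Submodule.map_sup,
    LinearMap.le_ker_iff_map.mp le_rfl, bot_sup_eq]

theorem ContinuousLinearMap.closure_range_adjoint [CompleteSpace E] [CompleteSpace F]
    (B : E →L[𝕜] F) :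
    closure (Set.range B.adjoint) = ((LinearMap.ker (B : E →ₗ[𝕜] F))ᗮ : Set E) := by
  rw [← B.adjoint_adjoint, ← orthogonal_range, Submodule.orthogonal_orthogonal_eq_closure,
    adjoint_adjoint]
  rfl

end Orthogonal

/-- **Douglas' theorem.**  Let `H, H1, H2` be Hilbert spaces and
`A : H1 → H`, `B : H2 → H` bounded linear operators with `ran A ⊆ ran B`.  Then
`Q := B† A` is a well-defined bounded linear operator, and it is the unique bounded
operator satisfying `A = B Q`, `ker Q = ker A` and `ran Q ⊆ closure (ran B*)`. -/
theorem statement1 {H H1 H2 : Type*}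
    [NormedAddCommGroup H] [InnerProductSpace ℝ H] [CompleteSpace H]
    [NormedAddCommGroup H1] [InnerProductSpace ℝ H1] [CompleteSpace H1]
    [NormedAddCommGroup H2] [InnerProductSpace ℝ H2] [CompleteSpace H2]
    (A : H1 →L[ℝ] H) (B : H2 →L[ℝ] H)
    (hran : Set.range A ⊆ Set.range B) :
    ∃! Q : H1 →L[ℝ] H2,
      A = B.comp Q ∧ LinearMap.ker (Q : H1 →ₗ[ℝ] H2) = LinearMap.ker (A : H1 →ₗ[ℝ] H) ∧
        Set.range Q ⊆ closure (Set.range (ContinuousLinearMap.adjoint B)) := by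
  set K := LinearMap.ker (B : H2 →ₗ[ℝ] H)
  have hinj : Set.InjOn B Kᗮ := (B : H2 →ₗ[ℝ] H).injOn_orthogonal_ker
  have hrange : Set.range (B ∘L Kᗮ.subtypeL) = Set.range B :=
    congrArg SetLike.coe (B : H2 →ₗ[ℝ] H).range_comp_subtype_orthogonal_ker
  obtain ⟨T, hBT⟩ := A.exists_comp_eq_of_injective_of_range_subset
    (hinj.injective : Function.Injective (B ∘L Kᗮ.subtypeL)) (hrange ▸ hran)
  rw [B.closure_range_adjoint]
  refine ⟨Kᗮ.subtypeL ∘L T, ⟨hBT.symm, ?_, ?_⟩, ?_⟩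
  · ext x
    rw [LinearMap.mem_ker, LinearMap.mem_ker, ← hBT]
    exact ⟨fun h => by simpa using congrArg B h, fun h => hinj (T x).2 Kᗮ.zero_mem (by simpa using h)⟩
  · rintro _ ⟨x, rfl⟩
    exact (T x).2
  · rintro Q ⟨hAQ, -, hQ⟩
    ext x
    exact hinj (hQ ⟨x, rfl⟩) (T x).2 (by simpa using congrArg (· x) (hAQ.symm.trans hBT.symm))
end

section
/- Let F = G ⊕ H be a direct sum of Hilbert spaces and C a positive bounded operator on F with block structure C = [[C_U, C_{UV}],[C_{VU}, C_V]]. If Q̂ : G → H is a bounded linear operator with C_V Q̂ = C_{VU}, then the block operator Q = [[0,0],[Q̂, Id_H]] satisfies Q² = Q, ran Q = H, and C Q = Q* C; in particular Q is a C-symmetric oblique projection onto H. -/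
/-!
Write `Q = inH ∘ a` with `a = Q̂ ∘ prG + prH`. Since `a ∘ inH = id`, `Q` is idempotent with
the same range as `inH`. The hypothesis `C_V Q̂ = C_VU` says exactly that `prH ∘ C = C_V ∘ a`, i.e.
`Q* C = Q* C Q`; the right-hand side is self-adjoint, so `Q* C = (Q* C)* = C Q`.
-/

noncomputable section
open scoped RealInnerProductSpace

variable (G H : Type*)
  [NormedAddCommGroup G] [InnerProductSpace ℝ G] [CompleteSpace G]
  [NormedAddCommGroup H] [InnerProductSpace ℝ H] [CompleteSpace H]

/-- The Hilbert direct sum `F = G ⊕ H`. -/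
abbrev DirSum := WithLp 2 (G × H)

/-- Embedding of `G` into `G ⊕ H`. -/
def inG : G →L[ℝ] DirSum G H :=
  ((WithLp.prodContinuousLinearEquiv 2 ℝ G H).symm :
      G × H →L[ℝ] DirSum G H).comp (ContinuousLinearMap.inl ℝ G H)

/-- Embedding of `H` into `G ⊕ H`. -/
def inH : H →L[ℝ] DirSum G H :=
  ((WithLp.prodContinuousLinearEquiv 2 ℝ G H).symm :
      G × H →L[ℝ] DirSum G H).comp (ContinuousLinearMap.inr ℝ G H)

/-- Projection of `G ⊕ H` onto `G`. -/
def prG : DirSum G H →L[ℝ] G :=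
  (ContinuousLinearMap.fst ℝ G H).comp
    ((WithLp.prodContinuousLinearEquiv 2 ℝ G H : DirSum G H →L[ℝ] G × H))

/-- Projection of `G ⊕ H` onto `H`. -/
def prH : DirSum G H →L[ℝ] H :=
  (ContinuousLinearMap.snd ℝ G H).comp
    ((WithLp.prodContinuousLinearEquiv 2 ℝ G H : DirSum G H →L[ℝ] G × H))

namespace ContinuousLinearMap

section RightInverse

variable {R M N : Type*} [Semiring R]
  [TopologicalSpace M] [AddCommMonoid M] [Module R M]
  [TopologicalSpace N] [AddCommMonoid N] [Module R N]
  {i : N →L[R] M} {a : M →L[R] N}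

lemma comp_comp_self_of_comp_eq_id (h : a ∘L i = ContinuousLinearMap.id R N) :
    (i ∘L a) ∘L (i ∘L a) = i ∘L a := by
  rw [comp_assoc, ← comp_assoc a, h, id_comp]

lemma range_comp_of_comp_eq_id (h : a ∘L i = ContinuousLinearMap.id R N) :
    Set.range (i ∘L a) = Set.range i :=
  have hsurj : Function.Surjective a := Function.LeftInverse.surjective (g := i) fun x => by
    simpa using congrArg (· x) h
  hsurj.range_comp i

end RightInverse

lemma comp_eq_adjoint_comp_of_adjoint_comp_eq {E : Type*} [NormedAddCommGroup E]
    [InnerProductSpace ℝ E] [CompleteSpace E] {C Q : E →L[ℝ] E} (hC : IsSelfAdjoint C)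
    (h : adjoint Q ∘L C = adjoint Q ∘L C ∘L Q) : C ∘L Q = adjoint Q ∘L C :=
  calc C ∘L Q = adjoint (adjoint Q ∘L C) := by rw [adjoint_comp, hC.adjoint_eq, adjoint_adjoint]
    _ = adjoint Q ∘L C ∘L Q := by rw [h, (hC.adjoint_conj Q).adjoint_eq]
    _ = adjoint Q ∘L C := h.symm

end ContinuousLinearMap

open ContinuousLinearMap

omit [CompleteSpace G] [CompleteSpace H] in
lemma prG_comp_inH : prG G H ∘L inH G H = 0 := rfl

omit [CompleteSpace G] [CompleteSpace H] in
lemma prH_comp_inH : prH G H ∘L inH G H = ContinuousLinearMap.id ℝ H := rfl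

omit [CompleteSpace G] [CompleteSpace H] in
lemma inG_comp_prG_add_inH_comp_prH :
    inG G H ∘L prG G H + inH G H ∘L prH G H = ContinuousLinearMap.id ℝ (DirSum G H) := by
  ext x : 1
  rw [WithLp.ext_iff]
  ext <;> simp [inG, inH, prG, prH]

lemma adjoint_inH : adjoint (inH G H) = prH G H := by
  refine ((eq_adjoint_iff _ _).mpr fun x y => ?_).symm
  simp [inH, prH, WithLp.prod_inner_apply]

omit [CompleteSpace G] [CompleteSpace H] in
variable {G H} in
lemma prH_comp_eq_of_comp_eq {C : DirSum G H →L[ℝ] DirSum G H} {Qhat : G →L[ℝ] H}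
    (hQhat : ((prH G H).comp (C.comp (inH G H))).comp Qhat = (prH G H).comp (C.comp (inG G H))) :
    prH G H ∘L C = (prH G H ∘L C ∘L inH G H) ∘L (Qhat ∘L prG G H + prH G H) :=
  calc prH G H ∘L C = prH G H ∘L C ∘L (inG G H ∘L prG G H + inH G H ∘L prH G H) := by
        rw [inG_comp_prG_add_inH_comp_prH, comp_id]
    _ = (prH G H ∘L C ∘L inG G H) ∘L prG G H
          + (prH G H ∘L C ∘L inH G H) ∘L prH G H := by
        simp only [comp_add, comp_assoc]
    _ = (prH G H ∘L C ∘L inH G H) ∘L (Qhat ∘L prG G H + prH G H) := by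
        rw [← hQhat]
        simp only [comp_add, comp_assoc]

theorem statement2
    (C : DirSum G H →L[ℝ] DirSum G H)
    (hsa : IsSelfAdjoint C)
    (Qhat : G →L[ℝ] H)
    (hQhat : ((prH G H).comp (C.comp (inH G H))).comp Qhat = (prH G H).comp (C.comp (inG G H))) :
    (((inH G H).comp ((Qhat.comp (prG G H)) + prH G H)).comp
        ((inH G H).comp ((Qhat.comp (prG G H)) + prH G H))
      = (inH G H).comp ((Qhat.comp (prG G H)) + prH G H)) ∧
    Set.range ((inH G H).comp ((Qhat.comp (prG G H)) + prH G H)) = Set.range (inH G H) ∧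
    C.comp ((inH G H).comp ((Qhat.comp (prG G H)) + prH G H))
      = (ContinuousLinearMap.adjoint ((inH G H).comp ((Qhat.comp (prG G H)) + prH G H))).comp C := by
  have ha : (Qhat ∘L prG G H + prH G H) ∘L inH G H = ContinuousLinearMap.id ℝ H := by
    simp only [add_comp, comp_assoc, prG_comp_inH, prH_comp_inH, comp_zero, zero_add]
  refine ⟨comp_comp_self_of_comp_eq_id ha, range_comp_of_comp_eq_id ha,
    comp_eq_adjoint_comp_of_adjoint_comp_eq hsa ?_⟩
  rw [adjoint_comp, adjoint_inH, comp_assoc, prH_comp_eq_of_comp_eq hQhat]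
  simp only [comp_assoc]
end
end

section
/- There exists a positive trace-class operator C = [[C_U, C_{UV}],[C_{VU}, C_V]] on the direct sum of two infinite-dimensional separable Hilbert spaces such that ran C_{VU} is not contained in ran C_V. Concretely, with orthonormal basis (e_j), take C_U = Σ j^{-2} e_j⊗e_j, C_V = Σ j^{-4} e_j⊗e_j, and C_{VU} = C_{UV} = Σ j^{-3} e_j⊗e_j; then ran C_{VU} ⊄ ran C_V. -/
/-!
All three operators are powers of the one diagonal operator `D = ∑ (j+1)⁻¹ e_j ⊗ e_j`:
`C_U = D²`, `C_V = D⁴`, `C_VU = D³`. Even powers of a self-adjoint operator are positive, and the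
trace of `D^k` is `∑ (j+1)^(-k)`, finite for `k ≥ 2`. Since `(j+1)⁻¹` is square-summable,
`y = ∑ (j+1)⁻¹ e_j` is a vector of `H`; if `D³ y = D⁴ z`, comparing coefficients gives
`⟪e_j, z⟫ = 1` for every `j`, which no vector of a Hilbert space satisfies.
-/

open scoped ENNReal lp RealInnerProductSpace

namespace lp

variable {ι : Type*} {p : ℝ≥0∞}

theorem norm_infty_mul_apply_le (c : ℓ^∞(ι, ℝ)) (f : lp (fun _ : ι => ℝ) p) (i : ι) :
    ‖c i * f i‖ ≤ ‖‖c‖ • f i‖ := by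
  rw [norm_mul, norm_smul, norm_norm]
  exact mul_le_mul_of_nonneg_right (norm_apply_le_norm ENNReal.top_ne_zero c i) (norm_nonneg _)

theorem memℓp_infty_mul (c : ℓ^∞(ι, ℝ)) (f : lp (fun _ : ι => ℝ) p) :
    Memℓp (fun i => c i * f i) p :=
  ((lp.memℓp f).const_smul ‖c‖).mono' (norm_infty_mul_apply_le c f)

variable [Fact (1 ≤ p)]

noncomputable def mulInfty (c : ℓ^∞(ι, ℝ)) : lp (fun _ : ι => ℝ) p →L[ℝ] lp (fun _ : ι => ℝ) p :=
  LinearMap.mkContinuous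
    { toFun f := ⟨fun i => c i * f i, memℓp_infty_mul c f⟩
      map_add' f g := by ext i; exact mul_add ..
      map_smul' r f := by ext i; simp [mul_left_comm] }
    ‖c‖ fun f => by
      rw [← norm_smul_of_nonneg (norm_nonneg c)]
      exact norm_mono (one_pos.trans_le Fact.out).ne' (norm_infty_mul_apply_le c f)

@[simp]
theorem mulInfty_apply (c : ℓ^∞(ι, ℝ)) (f : lp (fun _ : ι => ℝ) p) (i : ι) :
    mulInfty c f i = c i * f i :=
  rfl

end lp

namespace HilbertBasis

variable {ι H : Type*} [NormedAddCommGroup H] [InnerProductSpace ℝ H] (e : HilbertBasis ι ℝ H)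
  (c : ℓ^∞(ι, ℝ))

/-- The operator `∑ i, c i • (e i ⊗ e i)`, i.e. `x ↦ ∑ i, c i ⟪e i, x⟫ e i`. -/
noncomputable def diagonal : H →L[ℝ] H :=
  (e.repr.symm.toContinuousLinearEquiv : ℓ²(ι, ℝ) →L[ℝ] H) ∘L lp.mulInfty c ∘L
    (e.repr.toContinuousLinearEquiv : H →L[ℝ] ℓ²(ι, ℝ))

@[simp]
theorem repr_diagonal_apply (x : H) (i : ι) : e.repr (e.diagonal c x) i = c i * e.repr x i := by
  simp [diagonal]

theorem repr_diagonal_pow_apply (n : ℕ) (x : H) (i : ι) :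
    e.repr ((e.diagonal c ^ n) x) i = c i ^ n * e.repr x i := by
  induction n generalizing x with
  | zero => simp
  | succ n ih => rw [pow_succ', mul_apply_eq_comp, repr_diagonal_apply, ih, pow_succ', mul_assoc]

theorem diagonal_pow_apply_basis (n : ℕ) (i : ι) : (e.diagonal c ^ n) (e i) = c i ^ n • e i := by
  classical
  apply e.repr.injective
  ext j
  rw [repr_diagonal_pow_apply, map_smul, lp.coeFn_smul, e.repr_self]
  rcases eq_or_ne j i with rfl | hji
  · simp
  · simp [hji]

theorem isSelfAdjoint_diagonal [CompleteSpace H] : IsSelfAdjoint (e.diagonal c) := by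
  rw [ContinuousLinearMap.isSelfAdjoint_iff_isSymmetric]
  intro x y
  change ⟪e.diagonal c x, y⟫ = ⟪x, e.diagonal c y⟫
  rw [← e.repr.inner_map_map, ← e.repr.inner_map_map x, lp.inner_eq_tsum, lp.inner_eq_tsum]
  exact tsum_congr fun i => by simp only [repr_diagonal_apply, Real.inner_apply]; ring

theorem not_range_diagonal_pow_subset [Infinite ι] (hc : Memℓp c 2) (hc0 : ∀ i, c i ≠ 0) (n : ℕ) :
    ¬ Set.range (e.diagonal c ^ n) ⊆ Set.range (e.diagonal c ^ (n + 1)) := by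
  intro hsub
  obtain ⟨z, hz⟩ := hsub ⟨e.repr.symm ⟨c, hc⟩, rfl⟩
  have hz_repr : ∀ i, e.repr z i = 1 := fun i => by
    have := congrArg (fun v => e.repr v i) hz
    simp only [repr_diagonal_pow_apply, LinearIsometryEquiv.apply_symm_apply] at this
    exact mul_left_cancel₀ (pow_ne_zero (n + 1) (hc0 i)) (by rw [this, pow_succ, mul_one])
  have hsum := (lp.memℓp (e.repr z)).summable (p := 2) (by norm_num)
  simp [hz_repr, summable_const_iff] at hsum

end HilbertBasis

theorem IsSelfAdjoint.isPositive_pow {𝕜 E : Type*} [RCLike 𝕜] [NormedAddCommGroup E]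
    [InnerProductSpace 𝕜 E] [CompleteSpace E] {T : E →L[𝕜] E} (hT : IsSelfAdjoint T) {n : ℕ}
    (hn : Even n) : (T ^ n).IsPositive := by
  obtain ⟨k, rfl⟩ := hn
  simpa [(hT.pow k).adjoint_eq, pow_add, ContinuousLinearMap.mul_def] using
    ContinuousLinearMap.isPositive_adjoint_comp_self (T ^ k)

theorem summable_inv_nat_add_one_pow {k : ℕ} (hk : 1 < k) :
    Summable fun j : ℕ => ((j : ℝ) + 1)⁻¹ ^ k := by
  simpa [inv_pow] using (summable_nat_add_iff 1).2 (Real.summable_nat_pow_inv.2 hk)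

theorem memℓp_two_inv_nat_add_one : Memℓp (fun j : ℕ => ((j : ℝ) + 1)⁻¹) 2 :=
  memℓp_gen (by simpa using summable_inv_nat_add_one_pow one_lt_two)

noncomputable def invNatSucc : ℓ^∞(ℕ, ℝ) :=
  ⟨fun j => ((j : ℝ) + 1)⁻¹, memℓp_two_inv_nat_add_one.of_exponent_ge le_top⟩

@[simp]
theorem invNatSucc_apply (j : ℕ) : invNatSucc j = ((j : ℝ) + 1)⁻¹ :=
  rfl

/-- On an infinite-dimensional separable Hilbert space with orthonormal
basis `(e j)` there exist positive trace-class diagonal operators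
`C_U = Σ (j+1)⁻² e_j ⊗ e_j`, `C_V = Σ (j+1)⁻⁴ e_j ⊗ e_j` and
`C_VU = C_UV = Σ (j+1)⁻³ e_j ⊗ e_j` (forming a positive block operator
`C = [[C_U, C_UV],[C_VU, C_V]]`) such that `ran C_VU ⊄ ran C_V`. -/
theorem statement5 {H : Type*} [NormedAddCommGroup H] [InnerProductSpace ℝ H]
    [CompleteSpace H] (e : HilbertBasis ℕ ℝ H) :
    ∃ CU CV CVU : H →L[ℝ] H,
      IsSelfAdjoint CU ∧ IsSelfAdjoint CV ∧ IsSelfAdjoint CVU ∧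
      (∀ x : H, 0 ≤ ⟪x, CU x⟫) ∧ (∀ x : H, 0 ≤ ⟪x, CV x⟫) ∧
      -- trace-class: the diagonal traces are summable
      Summable (fun j : ℕ => ⟪e j, CU (e j)⟫) ∧
      Summable (fun j : ℕ => ⟪e j, CV (e j)⟫) ∧
      -- the concrete diagonal form of the three operators
      (∀ j : ℕ, CU (e j) = (((j : ℝ) + 1) ^ (-(2 : ℤ))) • e j) ∧
      (∀ j : ℕ, CV (e j) = (((j : ℝ) + 1) ^ (-(4 : ℤ))) • e j) ∧
      (∀ j : ℕ, CVU (e j) = (((j : ℝ) + 1) ^ (-(3 : ℤ))) • e j) ∧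
      ¬ Set.range CVU ⊆ Set.range CV := by
  set D := e.diagonal invNatSucc
  have hD : IsSelfAdjoint D := e.isSelfAdjoint_diagonal invNatSucc
  have hbasis (k : ℕ) (j : ℕ) : (D ^ k) (e j) = ((j : ℝ) + 1) ^ (-(k : ℤ)) • e j := by
    rw [e.diagonal_pow_apply_basis, invNatSucc_apply, zpow_neg, zpow_natCast, inv_pow]
  have htrace {k : ℕ} (hk : 1 < k) : Summable fun j => ⟪e j, (D ^ k) (e j)⟫ :=
    (summable_inv_nat_add_one_pow hk).congr fun j => by
      rw [e.diagonal_pow_apply_basis, real_inner_smul_right, real_inner_self_eq_norm_sq,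
        e.orthonormal.1, one_pow, mul_one, invNatSucc_apply]
  refine ⟨D ^ 2, D ^ 4, D ^ 3, hD.pow 2, hD.pow 4, hD.pow 3,
    (hD.isPositive_pow even_two).inner_nonneg_right,
    (hD.isPositive_pow ⟨2, rfl⟩).inner_nonneg_right,
    htrace one_lt_two, htrace (by norm_num), hbasis 2, hbasis 4, hbasis 3,
    e.not_range_diagonal_pow_subset invNatSucc memℓp_two_inv_nat_add_one
      (fun j => inv_ne_zero (Nat.cast_add_one_ne_zero j)) 3⟩
end

section
/- Let X be a random variable taking values in X with distribution P_X, k a measurable kernel on X with separable RKHS H, feature map φ(x) = k(x,·), and E[‖φ(X)‖²_H] < ∞. Then the kernel covariance operator C_X = Cov[φ(X)] satisfies ker C_X = { h ∈ H : h is P_X-a.e. constant on X }, and the uncentred operator ᵘC_X = E[φ(X)⊗φ(X)] satisfies ker ᵘC_X = { h ∈ H : h = 0 P_X-a.e. }. -/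
/-!
Testing `h` against itself gives `⟪h, C_X h⟫ = Var[h(X)]` and `⟪h, ᵘC_X h⟫ = E[h(X)²]`, so
`h` in the kernel forces `h(X)` to be a.s. constant, resp. a.s. zero. Conversely, if `h(X)` is
a.s. constant (resp. zero) then every coefficient `⟪h', C h⟫`, a covariance (resp. a mixed
moment) with `h(X)`, vanishes, hence `C h = 0`.
-/

open MeasureTheory
open scoped RealInnerProductSpace

section

open ProbabilityTheory

variable {Ω : Type*} [MeasurableSpace Ω] {μ : Measure Ω}

lemma ae_map_eq_const_iff {𝒳 : Type*} [MeasurableSpace 𝒳] {X : Ω → 𝒳} (hX : Measurable X)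
    {g : 𝒳 → ℝ} (hg : Measurable g) (c : ℝ) :
    (∀ᵐ x ∂μ.map X, g x = c) ↔ ∀ᵐ ω ∂μ, g (X ω) = c :=
  ae_map_iff hX.aemeasurable (measurableSet_eq_fun hg measurable_const)

lemma covariance_eq_zero_of_ae_eq_const_right [IsProbabilityMeasure μ] {X Y : Ω → ℝ} {c : ℝ}
    (hY : ∀ᵐ ω ∂μ, Y ω = c) : cov[X, Y; μ] = 0 := by
  have hmean : μ[Y] = c := by simp [integral_congr_ae hY]
  calc cov[X, Y; μ] = cov[X, fun _ ↦ c; μ] := by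
        unfold covariance
        refine integral_congr_ae ?_
        filter_upwards [hY] with ω hω
        simp [hω, hmean]
    _ = 0 := covariance_const_right c

variable {H : Type*} [NormedAddCommGroup H] [InnerProductSpace ℝ H] {T : H → H} {h : H}

lemma apply_eq_zero_iff_ae_eq_const_of_inner_eq_covariance [IsProbabilityMeasure μ]
    (g : H → Ω → ℝ) (hg : MemLp (g h) 2 μ) (hT : ∀ h', ⟪h', T h⟫ = cov[g h', g h; μ]) :
    T h = 0 ↔ ∃ c : ℝ, ∀ᵐ ω ∂μ, g h ω = c := by
  constructor
  · intro hTh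
    have hvar : Var[g h; μ] = 0 := by
      rw [← covariance_self hg.aemeasurable, ← hT h, hTh, inner_zero_right]
    exact ⟨μ[g h], ae_eq_integral_of_variance_eq_zero hg hvar⟩
  · rintro ⟨c, hc⟩
    refine ext_inner_left ℝ fun h' ↦ ?_
    rw [hT h', inner_zero_right, covariance_eq_zero_of_ae_eq_const_right hc]

lemma apply_eq_zero_iff_ae_eq_zero_of_inner_eq_integral_mul
    (g : H → Ω → ℝ) (hg : MemLp (g h) 2 μ) (hT : ∀ h', ⟪h', T h⟫ = ∫ ω, g h' ω * g h ω ∂μ) :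
    T h = 0 ↔ ∀ᵐ ω ∂μ, g h ω = 0 := by
  constructor
  · intro hTh
    have hsq : ∫ ω, g h ω ^ 2 ∂μ = 0 := by
      simp_rw [sq, ← hT h, hTh, inner_zero_right]
    filter_upwards [(integral_eq_zero_iff_of_nonneg (fun ω ↦ sq_nonneg (g h ω))
      hg.integrable_sq).1 hsq] with ω hω
    exact pow_eq_zero_iff two_ne_zero |>.1 hω
  · intro hzero
    refine ext_inner_left ℝ fun h' ↦ ?_
    rw [hT h', inner_zero_right]
    refine integral_eq_zero_of_ae ?_
    filter_upwards [hzero] with ω hω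
    simp [hω]

end

theorem statement7_general {Ω 𝒳 H : Type*} [MeasurableSpace Ω] [MeasurableSpace 𝒳]
    [NormedAddCommGroup H] [InnerProductSpace ℝ H]
    (ℙ : Measure Ω) [IsProbabilityMeasure ℙ]
    (X : Ω → 𝒳) (hX : Measurable X)
    (φ : 𝒳 → H) (hφ : StronglyMeasurable φ)
    (hφ2 : MemLp (fun ω => φ (X ω)) 2 ℙ)
    (CX uCX : H →L[ℝ] H)
    (hCX : ∀ h h' : H, ⟪h, CX h'⟫ =
      (∫ ω, ⟪h, φ (X ω)⟫ * ⟪h', φ (X ω)⟫ ∂ℙ)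
        - (∫ ω, ⟪h, φ (X ω)⟫ ∂ℙ) * (∫ ω, ⟪h', φ (X ω)⟫ ∂ℙ))
    (huCX : ∀ h h' : H, ⟪h, uCX h'⟫ = ∫ ω, ⟪h, φ (X ω)⟫ * ⟪h', φ (X ω)⟫ ∂ℙ) :
    (∀ h : H, h ∈ LinearMap.ker (CX : H →ₗ[ℝ] H) ↔ ∃ c : ℝ, ∀ᵐ x ∂(ℙ.map X), ⟪h, φ x⟫ = c) ∧
    (∀ h : H, h ∈ LinearMap.ker (uCX : H →ₗ[ℝ] H) ↔ ∀ᵐ x ∂(ℙ.map X), ⟪h, φ x⟫ = 0) := by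
  set f : H → Ω → ℝ := fun h ω ↦ ⟪h, φ (X ω)⟫
  have hf : ∀ h, MemLp (f h) 2 ℙ := fun h ↦ hφ2.const_inner h
  have hmeas : ∀ h : H, Measurable fun x ↦ ⟪h, φ x⟫ := fun h ↦
    ((innerSL ℝ h).continuous.comp_stronglyMeasurable hφ).measurable
  refine ⟨fun h ↦ ?_, fun h ↦ ?_⟩
  · have hcov : ∀ h', ⟪h', CX h⟫ = ProbabilityTheory.covariance (f h') (f h) ℙ := fun h' ↦
      (hCX h' h).trans (ProbabilityTheory.covariance_eq_sub (hf h') (hf h)).symm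
    simp only [LinearMap.mem_ker, ContinuousLinearMap.coe_coe,
      apply_eq_zero_iff_ae_eq_const_of_inner_eq_covariance f (hf h) hcov,
      ae_map_eq_const_iff hX (hmeas h)]
    rfl
  · simp only [LinearMap.mem_ker, ContinuousLinearMap.coe_coe,
      apply_eq_zero_iff_ae_eq_zero_of_inner_eq_integral_mul f (hf h) (fun h' ↦ huCX h' h),
      ae_map_eq_const_iff hX (hmeas h)]
    rfl

/-- Let `X` be a random variable with values in `𝒳`, `H` a separable RKHS on
`𝒳` with measurable feature map `φ` (so `h(x) = ⟪h, φ x⟫`) and `E[‖φ(X)‖²] < ∞`.  Then the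
centred kernel covariance operator `C_X` (characterised by `⟪h, C_X h'⟫ = Cov[h(X), h'(X)]`)
has kernel exactly the `P_X`-a.e. constant functions of `H`, and the uncentred operator
`ᵘC_X` (characterised by `⟪h, ᵘC_X h'⟫ = E[h(X) h'(X)]`) has kernel exactly the functions of
`H` vanishing `P_X`-a.e. -/
theorem statement7 {Ω 𝒳 H : Type*} [MeasurableSpace Ω] [MeasurableSpace 𝒳]
    [NormedAddCommGroup H] [InnerProductSpace ℝ H] [CompleteSpace H]
    [TopologicalSpace.SeparableSpace H]
    (ℙ : Measure Ω) [IsProbabilityMeasure ℙ]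
    (X : Ω → 𝒳) (hX : Measurable X)
    (φ : 𝒳 → H) (hφ : StronglyMeasurable φ)
    (hφ2 : MemLp (fun ω => φ (X ω)) 2 ℙ)
    (CX uCX : H →L[ℝ] H)
    (hCX : ∀ h h' : H, ⟪h, CX h'⟫ =
      (∫ ω, ⟪h, φ (X ω)⟫ * ⟪h', φ (X ω)⟫ ∂ℙ)
        - (∫ ω, ⟪h, φ (X ω)⟫ ∂ℙ) * (∫ ω, ⟪h', φ (X ω)⟫ ∂ℙ))
    (huCX : ∀ h h' : H, ⟪h, uCX h'⟫ = ∫ ω, ⟪h, φ (X ω)⟫ * ⟪h', φ (X ω)⟫ ∂ℙ) :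
    (∀ h : H, h ∈ LinearMap.ker (CX : H →ₗ[ℝ] H) ↔ ∃ c : ℝ, ∀ᵐ x ∂(ℙ.map X), ⟪h, φ x⟫ = c) ∧
    (∀ h : H, h ∈ LinearMap.ker (uCX : H →ₗ[ℝ] H) ↔ ∀ᵐ x ∂(ℙ.map X), ⟪h, φ x⟫ = 0) :=
  statement7_general ℙ X hX φ hφ hφ2 CX uCX hCX huCX
end

section
/- Under the CME setup (separable RKHSs H on X and G on Y with measurable feature maps φ, ψ; random variables X, Y with E[‖φ(X)‖² + ‖ψ(Y)‖²] < ∞), for all h ∈ H and g ∈ G, Cov[h(X), f_g(X)] = ⟨h, C_{XY} g⟩_H and E[h(X) f_g(X)] = ⟨h, ᵘC_{XY} g⟩_H, where f_g(x) = E[g(Y) | X = x]. -/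
open MeasureTheory
open scoped RealInnerProductSpace

/-! Both identities reduce to `E[h(X) f_g(X)] = E[h(X) g(Y)]` and `E[f_g(X)] = E[g(Y)]`. Since
`h(X)` is `σ(X)`-measurable, the pull-out property gives `h(X) f_g(X) = E[h(X) g(Y) | σ(X)]`
almost surely, and taking expectations (tower property) yields the first identity; the second
is the tower property for `g(Y)` itself. Square integrability of `φ(X)` and `ψ(Y)` makes
`h(X) g(Y)` integrable by Cauchy–Schwarz. -/

theorem integral_mul_eq_of_ae_eq_condExp {Ω : Type*} {m m₀ : MeasurableSpace Ω}
    {μ : Measure Ω} (hm : m ≤ m₀) [SigmaFinite (μ.trim hm)] {f g F : Ω → ℝ}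
    (hF : F =ᵐ[μ] μ[g|m]) (hf : AEStronglyMeasurable[m] f μ) (hfg : Integrable (f * g) μ)
    (hg : Integrable g μ) :
    ∫ ω, f ω * F ω ∂μ = ∫ ω, f ω * g ω ∂μ := by
  have hpull : (fun ω => f ω * F ω) =ᵐ[μ] μ[f * g|m] := by
    filter_upwards [hF, condExp_mul_of_aestronglyMeasurable_left hf hfg hg] with ω hFω hpullω
    rw [hFω, hpullω, Pi.mul_apply]
  rw [integral_congr_ae hpull]
  exact integral_condExp hm

theorem statement8_general {Ω 𝒳 𝒴 H G : Type*}
    [MeasurableSpace Ω] [MeasurableSpace 𝒳] [MeasurableSpace 𝒴]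
    [NormedAddCommGroup H] [InnerProductSpace ℝ H]
    [NormedAddCommGroup G] [InnerProductSpace ℝ G]
    (ℙ : Measure Ω) [IsProbabilityMeasure ℙ]
    (X : Ω → 𝒳) (hX : Measurable X) (Y : Ω → 𝒴)
    (φ : 𝒳 → H) (hφ : StronglyMeasurable φ) (ψ : 𝒴 → G)
    (hφ2 : MemLp (fun ω => φ (X ω)) 2 ℙ) (hψ2 : MemLp (fun ω => ψ (Y ω)) 2 ℙ)
    (CXY uCXY : G →L[ℝ] H)
    (hCXY : ∀ (h : H) (g : G), ⟪h, CXY g⟫ =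
      (∫ ω, ⟪h, φ (X ω)⟫ * ⟪g, ψ (Y ω)⟫ ∂ℙ)
        - (∫ ω, ⟪h, φ (X ω)⟫ ∂ℙ) * (∫ ω, ⟪g, ψ (Y ω)⟫ ∂ℙ))
    (huCXY : ∀ (h : H) (g : G), ⟪h, uCXY g⟫ = ∫ ω, ⟪h, φ (X ω)⟫ * ⟪g, ψ (Y ω)⟫ ∂ℙ)
    -- `f_g` is a version of the conditional expectation `E[g(Y) | X = ·]`
    (fg : G → 𝒳 → ℝ)
    (hfg : ∀ g : G, (fun ω => fg g (X ω)) =ᵐ[ℙ]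
      ℙ[(fun ω => ⟪g, ψ (Y ω)⟫) | MeasurableSpace.comap X ‹MeasurableSpace 𝒳›]) :
    ∀ (h : H) (g : G),
      ((∫ ω, ⟪h, φ (X ω)⟫ * fg g (X ω) ∂ℙ)
          - (∫ ω, ⟪h, φ (X ω)⟫ ∂ℙ) * (∫ ω, fg g (X ω) ∂ℙ) = ⟪h, CXY g⟫) ∧
      (∫ ω, ⟪h, φ (X ω)⟫ * fg g (X ω) ∂ℙ = ⟪h, uCXY g⟫) := by
  intro h g
  have hh_meas : StronglyMeasurable[MeasurableSpace.comap X ‹_›] fun ω => ⟪h, φ (X ω)⟫ :=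
    ((innerSL ℝ h).continuous.comp_stronglyMeasurable hφ).comp_measurable
      (Measurable.of_comap_le le_rfl)
  have hg_int : Integrable (fun ω => ⟪g, ψ (Y ω)⟫) ℙ := (hψ2.const_inner g).integrable one_le_two
  have hhg_int : Integrable (fun ω => ⟪h, φ (X ω)⟫ * ⟪g, ψ (Y ω)⟫) ℙ :=
    (hφ2.const_inner h).integrable_mul (hψ2.const_inner g)
  have hprod : ∫ ω, ⟪h, φ (X ω)⟫ * fg g (X ω) ∂ℙ = ∫ ω, ⟪h, φ (X ω)⟫ * ⟪g, ψ (Y ω)⟫ ∂ℙ :=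
    integral_mul_eq_of_ae_eq_condExp hX.comap_le (hfg g) hh_meas.aestronglyMeasurable hhg_int hg_int
  have hmean : ∫ ω, fg g (X ω) ∂ℙ = ∫ ω, ⟪g, ψ (Y ω)⟫ ∂ℙ := by
    rw [integral_congr_ae (hfg g)]
    exact integral_condExp hX.comap_le
  exact ⟨by rw [hCXY, hprod, hmean], by rw [huCXY, hprod]⟩

/-- In the CME setup (separable RKHSs `H` on `𝒳` and `G` on `𝒴` with
feature maps `φ, ψ`; random variables `X, Y` with `E[‖φ(X)‖² + ‖ψ(Y)‖²] < ∞`;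
`f_g = E[g(Y)|X = ·]`), for all `h ∈ H` and `g ∈ G` one has
`Cov[h(X), f_g(X)] = ⟪h, C_XY g⟫` and `E[h(X) f_g(X)] = ⟪h, ᵘC_XY g⟫`,
where `C_XY = Cov[φ(X), ψ(Y)]` and `ᵘC_XY = E[φ(X) ⊗ ψ(Y)]` are characterised by
`⟪h, C_XY g⟫ = Cov[h(X), g(Y)]` and `⟪h, ᵘC_XY g⟫ = E[h(X) g(Y)]`. -/
theorem statement8 {Ω 𝒳 𝒴 H G : Type*}
    [MeasurableSpace Ω] [MeasurableSpace 𝒳] [MeasurableSpace 𝒴]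
    [NormedAddCommGroup H] [InnerProductSpace ℝ H] [CompleteSpace H]
    [TopologicalSpace.SeparableSpace H]
    [NormedAddCommGroup G] [InnerProductSpace ℝ G] [CompleteSpace G]
    [TopologicalSpace.SeparableSpace G]
    (ℙ : Measure Ω) [IsProbabilityMeasure ℙ]
    (X : Ω → 𝒳) (hX : Measurable X) (Y : Ω → 𝒴) (hY : Measurable Y)
    (φ : 𝒳 → H) (hφ : StronglyMeasurable φ) (ψ : 𝒴 → G) (hψ : StronglyMeasurable ψ)
    (hφ2 : MemLp (fun ω => φ (X ω)) 2 ℙ) (hψ2 : MemLp (fun ω => ψ (Y ω)) 2 ℙ)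
    (CXY uCXY : G →L[ℝ] H)
    (hCXY : ∀ (h : H) (g : G), ⟪h, CXY g⟫ =
      (∫ ω, ⟪h, φ (X ω)⟫ * ⟪g, ψ (Y ω)⟫ ∂ℙ)
        - (∫ ω, ⟪h, φ (X ω)⟫ ∂ℙ) * (∫ ω, ⟪g, ψ (Y ω)⟫ ∂ℙ))
    (huCXY : ∀ (h : H) (g : G), ⟪h, uCXY g⟫ = ∫ ω, ⟪h, φ (X ω)⟫ * ⟪g, ψ (Y ω)⟫ ∂ℙ)
    -- `f_g` is a version of the conditional expectation `E[g(Y) | X = ·]`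
    (fg : G → 𝒳 → ℝ)
    (hfg : ∀ g : G, (fun ω => fg g (X ω)) =ᵐ[ℙ]
      ℙ[(fun ω => ⟪g, ψ (Y ω)⟫) | MeasurableSpace.comap X ‹MeasurableSpace 𝒳›]) :
    ∀ (h : H) (g : G),
      ((∫ ω, ⟪h, φ (X ω)⟫ * fg g (X ω) ∂ℙ)
          - (∫ ω, ⟪h, φ (X ω)⟫ ∂ℙ) * (∫ ω, fg g (X ω) ∂ℙ) = ⟪h, CXY g⟫) ∧
      (∫ ω, ⟪h, φ (X ω)⟫ * fg g (X ω) ∂ℙ = ⟪h, uCXY g⟫) :=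
  statement8_general ℙ X hX Y φ hφ ψ hφ2 hψ2 CXY uCXY hCXY huCXY fg hfg
end

section
/- Under the CME setup, the following are equivalent: (i) for each g ∈ G there exists h_g ∈ H with Cov[h_g(X) − f_g(X), h(X)] = 0 for all h ∈ H (Assumption C); (ii) for each g ∈ G there exists h_g ∈ H with C_X h_g = C_{XY} g; (iii) ran C_{XY} ⊆ ran C_X. -/
/-!
Conditioning on `X` does not change covariances with `X`-measurable variables, so
`Cov[f_g(X), h(X)] = Cov[g(Y), h(X)] = ⟪h, C_XY g⟫`. Hence the covariance in Assumption C is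
`⟪h, C_X h_g - C_XY g⟫`, which vanishes for every `h` exactly when `C_X h_g = C_XY g`.
-/

open MeasureTheory
open scoped RealInnerProductSpace

namespace ProbabilityTheory

variable {Ω : Type*} {m m₀ : MeasurableSpace Ω} {μ : Measure Ω} {X X' Y : Ω → ℝ}

lemma covariance_congr_ae_left (hX : X =ᵐ[μ] X') : cov[X, Y; μ] = cov[X', Y; μ] := by
  unfold covariance
  rw [integral_congr_ae hX]
  refine integral_congr_ae ?_
  filter_upwards [hX] with ω hω
  rw [hω]

lemma covariance_eq_integral_mul_sub [IsProbabilityMeasure μ]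
    (hX : MemLp X 2 μ) (hY : MemLp Y 2 μ) :
    cov[X, Y; μ] = ∫ ω, X ω * Y ω ∂μ - (∫ ω, X ω ∂μ) * ∫ ω, Y ω ∂μ :=
  covariance_eq_sub hX hY

lemma covariance_condExp_left [IsProbabilityMeasure μ] (hm : m ≤ m₀)
    (hX : MemLp X 2 μ) (hY : MemLp Y 2 μ) (hYm : AEStronglyMeasurable[m] Y μ) :
    cov[μ[X | m], Y; μ] = cov[X, Y; μ] := by
  have pull_out : μ[X * Y | m] =ᵐ[μ] μ[X | m] * Y :=
    condExp_mul_of_aestronglyMeasurable_right hYm (hX.integrable_mul hY) (hX.integrable one_le_two)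
  rw [covariance_eq_sub (hX.condExp one_le_two) hY, covariance_eq_sub hX hY,
    ← integral_congr_ae pull_out, integral_condExp hm, integral_condExp hm]

end ProbabilityTheory

-- not a full `open ProbabilityTheory`, whose scoped notation `ℙ` would capture the binder `ℙ`
open ProbabilityTheory (covariance_comm covariance_condExp_left covariance_congr_ae_left
  covariance_eq_integral_mul_sub covariance_fun_sub_left)

theorem statement9_general {Ω 𝒳 𝒴 H G : Type*}
    [MeasurableSpace Ω] [MeasurableSpace 𝒳] [MeasurableSpace 𝒴]
    [NormedAddCommGroup H] [InnerProductSpace ℝ H]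
    [NormedAddCommGroup G] [InnerProductSpace ℝ G]
    (ℙ : Measure Ω) [IsProbabilityMeasure ℙ]
    (X : Ω → 𝒳) (hX : Measurable X) (Y : Ω → 𝒴)
    (φ : 𝒳 → H) (hφ : StronglyMeasurable φ) (ψ : 𝒴 → G)
    (hφ2 : MemLp (fun ω => φ (X ω)) 2 ℙ) (hψ2 : MemLp (fun ω => ψ (Y ω)) 2 ℙ)
    (CX : H →L[ℝ] H) (CXY : G →L[ℝ] H)
    (hCX : ∀ h h' : H, ⟪h, CX h'⟫ =
      (∫ ω, ⟪h, φ (X ω)⟫ * ⟪h', φ (X ω)⟫ ∂ℙ)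
        - (∫ ω, ⟪h, φ (X ω)⟫ ∂ℙ) * (∫ ω, ⟪h', φ (X ω)⟫ ∂ℙ))
    (hCXY : ∀ (h : H) (g : G), ⟪h, CXY g⟫ =
      (∫ ω, ⟪h, φ (X ω)⟫ * ⟪g, ψ (Y ω)⟫ ∂ℙ)
        - (∫ ω, ⟪h, φ (X ω)⟫ ∂ℙ) * (∫ ω, ⟪g, ψ (Y ω)⟫ ∂ℙ))
    -- `f_g` is a version of the conditional expectation `E[g(Y) | X = ·]`
    (fg : G → 𝒳 → ℝ)
    (hfg : ∀ g : G, (fun ω => fg g (X ω)) =ᵐ[ℙ]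
      ℙ[(fun ω => ⟪g, ψ (Y ω)⟫) | MeasurableSpace.comap X ‹MeasurableSpace 𝒳›]) :
    ((∀ g : G, ∃ hg : H, ∀ h : H,
        (∫ ω, (⟪hg, φ (X ω)⟫ - fg g (X ω)) * ⟪h, φ (X ω)⟫ ∂ℙ)
          - (∫ ω, ⟪hg, φ (X ω)⟫ - fg g (X ω) ∂ℙ) * (∫ ω, ⟪h, φ (X ω)⟫ ∂ℙ) = 0) ↔
      (∀ g : G, ∃ hg : H, CX hg = CXY g)) ∧
    ((∀ g : G, ∃ hg : H, CX hg = CXY g) ↔ Set.range CXY ⊆ Set.range CX) := by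
  have hφX (h : H) : MemLp (fun ω => ⟪h, φ (X ω)⟫) 2 ℙ := hφ2.const_inner h
  have hψY (g : G) : MemLp (fun ω => ⟪g, ψ (Y ω)⟫) 2 ℙ := hψ2.const_inner g
  have hfgX (g : G) : MemLp (fun ω => fg g (X ω)) 2 ℙ :=
    ((hψY g).condExp one_le_two).ae_eq (hfg g).symm
  have hφX_meas (h : H) :
      AEStronglyMeasurable[MeasurableSpace.comap X ‹_›] (fun ω => ⟪h, φ (X ω)⟫) ℙ :=
    ((stronglyMeasurable_const.inner hφ).comp_measurable (comap_measurable X)).aestronglyMeasurable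
  have cov_residual (g : G) (hg h : H) :
      (∫ ω, (⟪hg, φ (X ω)⟫ - fg g (X ω)) * ⟪h, φ (X ω)⟫ ∂ℙ)
          - (∫ ω, ⟪hg, φ (X ω)⟫ - fg g (X ω) ∂ℙ) * (∫ ω, ⟪h, φ (X ω)⟫ ∂ℙ)
        = ⟪h, CX hg⟫ - ⟪h, CXY g⟫ := by
    rw [hCX, hCXY,
      ← covariance_eq_integral_mul_sub (X := fun ω => ⟪hg, φ (X ω)⟫ - fg g (X ω))
        ((hφX hg).sub (hfgX g)) (hφX h),
      ← covariance_eq_integral_mul_sub (hφX h) (hφX hg),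
      ← covariance_eq_integral_mul_sub (hφX h) (hψY g),
      covariance_fun_sub_left (hφX hg) (hfgX g) (hφX h), covariance_congr_ae_left (hfg g),
      covariance_condExp_left hX.comap_le (hψY g) (hφX h) (hφX_meas h),
      covariance_comm _ (fun ω => ⟪h, φ (X ω)⟫), covariance_comm _ (fun ω => ⟪h, φ (X ω)⟫)]
  refine ⟨forall_congr' fun g => exists_congr fun hg => ?_, ?_⟩
  · simp only [cov_residual, sub_eq_zero]
    exact (ext_iff_inner_left ℝ).symm
  · simp only [Set.range_subset_iff, Set.mem_range]

/-- In the CME setup, the following are equivalent: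
(i) Assumption C: for each `g ∈ G` there is `h_g ∈ H` with
`Cov[h_g(X) − f_g(X), h(X)] = 0` for all `h ∈ H`;
(ii) for each `g ∈ G` there is `h_g ∈ H` with `C_X h_g = C_XY g`;
(iii) `ran C_XY ⊆ ran C_X`. -/
theorem statement9 {Ω 𝒳 𝒴 H G : Type*}
    [MeasurableSpace Ω] [MeasurableSpace 𝒳] [MeasurableSpace 𝒴]
    [NormedAddCommGroup H] [InnerProductSpace ℝ H] [CompleteSpace H]
    [TopologicalSpace.SeparableSpace H]
    [NormedAddCommGroup G] [InnerProductSpace ℝ G] [CompleteSpace G]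
    [TopologicalSpace.SeparableSpace G]
    (ℙ : Measure Ω) [IsProbabilityMeasure ℙ]
    (X : Ω → 𝒳) (hX : Measurable X) (Y : Ω → 𝒴) (hY : Measurable Y)
    (φ : 𝒳 → H) (hφ : StronglyMeasurable φ) (ψ : 𝒴 → G) (hψ : StronglyMeasurable ψ)
    (hφ2 : MemLp (fun ω => φ (X ω)) 2 ℙ) (hψ2 : MemLp (fun ω => ψ (Y ω)) 2 ℙ)
    (CX : H →L[ℝ] H) (CXY : G →L[ℝ] H)
    (hCX : ∀ h h' : H, ⟪h, CX h'⟫ =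
      (∫ ω, ⟪h, φ (X ω)⟫ * ⟪h', φ (X ω)⟫ ∂ℙ)
        - (∫ ω, ⟪h, φ (X ω)⟫ ∂ℙ) * (∫ ω, ⟪h', φ (X ω)⟫ ∂ℙ))
    (hCXY : ∀ (h : H) (g : G), ⟪h, CXY g⟫ =
      (∫ ω, ⟪h, φ (X ω)⟫ * ⟪g, ψ (Y ω)⟫ ∂ℙ)
        - (∫ ω, ⟪h, φ (X ω)⟫ ∂ℙ) * (∫ ω, ⟪g, ψ (Y ω)⟫ ∂ℙ))
    -- `f_g` is a version of the conditional expectation `E[g(Y) | X = ·]`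
    (fg : G → 𝒳 → ℝ)
    (hfg : ∀ g : G, (fun ω => fg g (X ω)) =ᵐ[ℙ]
      ℙ[(fun ω => ⟪g, ψ (Y ω)⟫) | MeasurableSpace.comap X ‹MeasurableSpace 𝒳›]) :
    ((∀ g : G, ∃ hg : H, ∀ h : H,
        (∫ ω, (⟪hg, φ (X ω)⟫ - fg g (X ω)) * ⟪h, φ (X ω)⟫ ∂ℙ)
          - (∫ ω, ⟪hg, φ (X ω)⟫ - fg g (X ω) ∂ℙ) * (∫ ω, ⟪h, φ (X ω)⟫ ∂ℙ) = 0) ↔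
      (∀ g : G, ∃ hg : H, CX hg = CXY g)) ∧
    ((∀ g : G, ∃ hg : H, CX hg = CXY g) ↔ Set.range CXY ⊆ Set.range CX) :=
  statement9_general ℙ X hX Y φ hφ ψ hφ2 hψ2 CX CXY hCX hCXY fg hfg
end

section
/- Under the CME setup, if Assumption C holds (equivalently ran C_{XY} ⊆ ran C_X), then for every g ∈ G the choice h_g = C_X† C_{XY} g satisfies Cov[(C_X† C_{XY} g)(X) − f_g(X), h(X)] = 0 for all h ∈ H. Moreover, if for some g ∈ G there exist h' ∈ H and c' ∈ ℝ with f_g = h' + c' P_X-a.e., then there exists a constant c_g ∈ ℝ such that f_g = c_g + C_X† C_{XY} g holds P_X-a.e. -/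
open MeasureTheory
open scoped RealInnerProductSpace

/-!
Since `C_X Q = C_XY`, `Cov[⟪Q g, φ(X)⟫, h(X)] = ⟪h, C_XY g⟫ = Cov[g(Y), h(X)]`, and as `h(X)` is
`σ(X)`-measurable the tower property turns the last covariance into `Cov[f_g(X), h(X)]`.
If moreover `f_g = h' + c'`, this orthogonality says `C_X (Q g - h') = 0`, so
`⟪Q g - h', φ(X)⟫` has zero variance and is a.s. constant.
-/

namespace ProbabilityTheory

variable {Ω : Type*} {m m₀ : MeasurableSpace Ω} {μ : Measure Ω}

lemma covariance_congr_left {X X' : Ω → ℝ} (Y : Ω → ℝ) (h : X =ᵐ[μ] X') :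
    cov[X, Y; μ] = cov[X', Y; μ] := by
  rw [covariance, covariance, integral_congr_ae h]
  refine integral_congr_ae ?_
  filter_upwards [h] with ω hω
  rw [hω]

lemma covariance_condExp_left_s10 [IsProbabilityMeasure μ] (hm : m ≤ m₀) {Z W : Ω → ℝ}
    (hZ : MemLp Z 2 μ) (hW : MemLp W 2 μ) (hWm : StronglyMeasurable[m] W) :
    cov[μ[Z|m], W; μ] = cov[Z, W; μ] := by
  have hpull : μ[W * Z|m] =ᵐ[μ] W * μ[Z|m] :=
    condExp_mul_of_stronglyMeasurable_left hWm (hW.integrable_mul hZ)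
      (hZ.integrable one_le_two)
  have hprod : μ[μ[Z|m] * W] = μ[Z * W] := by
    calc μ[μ[Z|m] * W] = μ[μ[W * Z|m]] := by
          rw [mul_comm μ[Z|m] W]; exact integral_congr_ae hpull.symm
      _ = μ[W * Z] := integral_condExp hm
      _ = μ[Z * W] := by rw [mul_comm]
  rw [covariance_eq_sub (hZ.condExp one_le_two) hW, covariance_eq_sub hZ hW, hprod,
    integral_condExp hm]

section CrossCovarianceOperator

variable {H G : Type*} [NormedAddCommGroup H] [InnerProductSpace ℝ H]
  [NormedAddCommGroup G] [InnerProductSpace ℝ G]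

def IsCrossCovarianceOperator (C : G →L[ℝ] H) (U : Ω → H) (V : Ω → G) (μ : Measure Ω) :
    Prop :=
  ∀ h g, ⟪h, C g⟫ = cov[fun ω ↦ ⟪h, U ω⟫, fun ω ↦ ⟪g, V ω⟫; μ]

lemma isCrossCovarianceOperator_of_inner_eq [IsProbabilityMeasure μ] {C : G →L[ℝ] H}
    {U : Ω → H} {V : Ω → G} (hU : MemLp U 2 μ) (hV : MemLp V 2 μ)
    (hC : ∀ h g, ⟪h, C g⟫ = (∫ ω, ⟪h, U ω⟫ * ⟪g, V ω⟫ ∂μ)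
      - (∫ ω, ⟪h, U ω⟫ ∂μ) * (∫ ω, ⟪g, V ω⟫ ∂μ)) :
    IsCrossCovarianceOperator C U V μ := fun h g ↦ by
  rw [hC, covariance_eq_sub (hU.const_inner h) (hV.const_inner g)]
  rfl

namespace IsCrossCovarianceOperator

variable {C : H →L[ℝ] H} {U : Ω → H}

lemma apply_eq_zero (hC : IsCrossCovarianceOperator C U U μ) {k : H}
    (hk : ∀ h, cov[fun ω ↦ ⟪k, U ω⟫, fun ω ↦ ⟪h, U ω⟫; μ] = 0) : C k = 0 :=
  ext_inner_left ℝ fun h ↦ by rw [hC, covariance_comm, hk, inner_zero_right]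

lemma ae_eq_integral_of_apply_eq_zero [IsFiniteMeasure μ]
    (hC : IsCrossCovarianceOperator C U U μ) (hU : MemLp U 2 μ) {k : H} (hk : C k = 0) :
    ∀ᵐ ω ∂μ, ⟪k, U ω⟫ = μ[fun ω ↦ ⟪k, U ω⟫] := by
  refine ae_eq_integral_of_variance_eq_zero (hU.const_inner k) ?_
  rw [← covariance_self (hU.const_inner k).aemeasurable, ← hC, hk, inner_zero_right]

lemma ae_eq_integral_of_covariance_sub_eq_zero [IsProbabilityMeasure μ]
    (hC : IsCrossCovarianceOperator C U U μ) (hU : MemLp U 2 μ) {F : Ω → ℝ} {k h' : H} {c : ℝ}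
    (hF : F =ᵐ[μ] fun ω ↦ ⟪h', U ω⟫ + c)
    (horth : ∀ h, cov[fun ω ↦ ⟪k, U ω⟫ - F ω, fun ω ↦ ⟪h, U ω⟫; μ] = 0) :
    ∀ᵐ ω ∂μ, ⟪k - h', U ω⟫ = μ[fun ω ↦ ⟪k - h', U ω⟫] := by
  refine hC.ae_eq_integral_of_apply_eq_zero hU (hC.apply_eq_zero fun h ↦ ?_)
  have hF_int : Integrable F μ :=
    (((hU.const_inner h').integrable one_le_two).add (integrable_const c)).congr hF.symm
  have hshift : (fun ω ↦ ⟪k - h', U ω⟫) =ᵐ[μ] fun ω ↦ (⟪k, U ω⟫ - F ω) + c := by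
    filter_upwards [hF] with ω hω
    rw [inner_sub_left, hω]
    ring
  rw [covariance_congr_left _ hshift,
    covariance_add_const_left (X := fun ω ↦ ⟪k, U ω⟫ - F ω)
      (((hU.const_inner k).integrable one_le_two).sub hF_int), horth]

variable [IsProbabilityMeasure μ] {CUV Q : G →L[ℝ] H} {V : Ω → G}

lemma covariance_inner_sub_condExp_eq_zero (hC : IsCrossCovarianceOperator C U U μ)
    (hCUV : IsCrossCovarianceOperator CUV U V μ) (hQ : C.comp Q = CUV) (hm : m ≤ m₀)
    (hU : MemLp U 2 μ) (hUm : StronglyMeasurable[m] U) (hV : MemLp V 2 μ) (g : G) (h : H) :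
    cov[fun ω ↦ ⟪Q g, U ω⟫ - μ[fun ω ↦ ⟪g, V ω⟫|m] ω, fun ω ↦ ⟪h, U ω⟫; μ] = 0 := by
  have hVg : MemLp (fun ω ↦ ⟪g, V ω⟫) 2 μ := hV.const_inner g
  have hUh : MemLp (fun ω ↦ ⟪h, U ω⟫) 2 μ := hU.const_inner h
  have hQg : CUV g = C (Q g) := by rw [← hQ]; rfl
  rw [covariance_fun_sub_left (hU.const_inner (Q g)) (hVg.condExp one_le_two) hUh,
    covariance_condExp_left_s10 hm hVg hUh (stronglyMeasurable_const.inner hUm), covariance_comm,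
    ← hC, ← hQg, hCUV, covariance_comm, sub_self]

end IsCrossCovarianceOperator

end CrossCovarianceOperator

end ProbabilityTheory

-- Opening all of `ProbabilityTheory` would turn the measure's name `ℙ` below into notation.
open ProbabilityTheory (covariance covariance_eq_sub covariance_congr_left
  isCrossCovarianceOperator_of_inner_eq)

theorem statement10_general {Ω 𝒳 𝒴 H G : Type*}
    [MeasurableSpace Ω] [MeasurableSpace 𝒳]
    [NormedAddCommGroup H] [InnerProductSpace ℝ H]
    [NormedAddCommGroup G] [InnerProductSpace ℝ G]
    (ℙ : Measure Ω) [IsProbabilityMeasure ℙ]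
    (X : Ω → 𝒳) (hX : Measurable X) (Y : Ω → 𝒴)
    (φ : 𝒳 → H) (hφ : StronglyMeasurable φ) (ψ : 𝒴 → G)
    (hφ2 : MemLp (fun ω => φ (X ω)) 2 ℙ) (hψ2 : MemLp (fun ω => ψ (Y ω)) 2 ℙ)
    (CX : H →L[ℝ] H) (CXY : G →L[ℝ] H)
    (hCX : ∀ h h' : H, ⟪h, CX h'⟫ =
      (∫ ω, ⟪h, φ (X ω)⟫ * ⟪h', φ (X ω)⟫ ∂ℙ)
        - (∫ ω, ⟪h, φ (X ω)⟫ ∂ℙ) * (∫ ω, ⟪h', φ (X ω)⟫ ∂ℙ))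
    (hCXY : ∀ (h : H) (g : G), ⟪h, CXY g⟫ =
      (∫ ω, ⟪h, φ (X ω)⟫ * ⟪g, ψ (Y ω)⟫ ∂ℙ)
        - (∫ ω, ⟪h, φ (X ω)⟫ ∂ℙ) * (∫ ω, ⟪g, ψ (Y ω)⟫ ∂ℙ))
    (fg : G → 𝒳 → ℝ)
    (hfg : ∀ g : G, (fun ω => fg g (X ω)) =ᵐ[ℙ]
      ℙ[(fun ω => ⟪g, ψ (Y ω)⟫) | MeasurableSpace.comap X ‹MeasurableSpace 𝒳›])
    -- `Q` is the operator `C_X† C_XY`, via its Douglas characterisation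
    (Q : G →L[ℝ] H)
    (hQ1 : CX.comp Q = CXY) :
    (∀ (g : G) (h : H),
      (∫ ω, (⟪Q g, φ (X ω)⟫ - fg g (X ω)) * ⟪h, φ (X ω)⟫ ∂ℙ)
        - (∫ ω, ⟪Q g, φ (X ω)⟫ - fg g (X ω) ∂ℙ) * (∫ ω, ⟪h, φ (X ω)⟫ ∂ℙ) = 0) ∧
    (∀ g : G,
      (∃ (h' : H) (c' : ℝ), fg g =ᵐ[ℙ.map X] fun x => ⟪h', φ x⟫ + c') →
      ∃ c : ℝ, fg g =ᵐ[ℙ.map X] fun x => c + ⟪Q g, φ x⟫) := by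
  have hCX' := isCrossCovarianceOperator_of_inner_eq hφ2 hφ2 hCX
  have hCXY' := isCrossCovarianceOperator_of_inner_eq hφ2 hψ2 hCXY
  have horth : ∀ g h,
      covariance (fun ω ↦ ⟪Q g, φ (X ω)⟫ - fg g (X ω)) (fun ω ↦ ⟪h, φ (X ω)⟫) ℙ = 0 :=
    fun g h ↦ (covariance_congr_left _ ((Filter.EventuallyEq.refl _ _).sub (hfg g))).trans <|
      hCX'.covariance_inner_sub_condExp_eq_zero hCXY' hQ1 hX.comap_le hφ2
        (hφ.comp_measurable (comap_measurable X)) hψ2 g h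
  refine ⟨fun g h ↦ ?_, ?_⟩
  · have hres : MemLp (fun ω ↦ ⟪Q g, φ (X ω)⟫ - fg g (X ω)) 2 ℙ :=
      (hφ2.const_inner (Q g)).sub (((hψ2.const_inner g).condExp one_le_two).ae_eq (hfg g).symm)
    exact (covariance_eq_sub hres (hφ2.const_inner h)).symm.trans (horth g h)
  · rintro g ⟨h', c', hfg'⟩
    have hconst := hCX'.ae_eq_integral_of_covariance_sub_eq_zero hφ2
      (ae_of_ae_map hX.aemeasurable hfg') (horth g)
    set d := ∫ ω, ⟪Q g - h', φ (X ω)⟫ ∂ℙ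
    have hconst' : ∀ᵐ x ∂ℙ.map X, ⟪Q g - h', φ x⟫ = d :=
      (ae_map_iff hX.aemeasurable (measurableSet_eq_fun
        (stronglyMeasurable_const.inner hφ).measurable measurable_const)).2 hconst
    refine ⟨c' - d, ?_⟩
    filter_upwards [hfg', hconst'] with x hx hd
    rw [hx, ← hd, inner_sub_left]
    ring

/-- In the CME setup, if Assumption C holds (equivalently
`ran C_XY ⊆ ran C_X`), then the choice `h_g = C_X† C_XY g` works: writing `Q` for the
operator `C_X† C_XY` (characterised, via Douglas' theorem, by `C_X Q = C_XY`,
`ker Q = ker C_XY`, `ran Q ⊆ closure (ran C_X)`; note `ran C_X* = ran C_X`), one has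
`Cov[(Q g)(X) − f_g(X), h(X)] = 0` for all `h ∈ H`, `g ∈ G`.  Moreover, if for some
`g ∈ G` there are `h' ∈ H`, `c' ∈ ℝ` with `f_g = h' + c'` `P_X`-a.e., then there is a
constant `c_g` with `f_g = c_g + Q g` `P_X`-a.e. -/
theorem statement10 {Ω 𝒳 𝒴 H G : Type*}
    [MeasurableSpace Ω] [MeasurableSpace 𝒳] [MeasurableSpace 𝒴]
    [NormedAddCommGroup H] [InnerProductSpace ℝ H] [CompleteSpace H]
    [TopologicalSpace.SeparableSpace H]
    [NormedAddCommGroup G] [InnerProductSpace ℝ G] [CompleteSpace G]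
    [TopologicalSpace.SeparableSpace G]
    (ℙ : Measure Ω) [IsProbabilityMeasure ℙ]
    (X : Ω → 𝒳) (hX : Measurable X) (Y : Ω → 𝒴) (hY : Measurable Y)
    (φ : 𝒳 → H) (hφ : StronglyMeasurable φ) (ψ : 𝒴 → G) (hψ : StronglyMeasurable ψ)
    (hφ2 : MemLp (fun ω => φ (X ω)) 2 ℙ) (hψ2 : MemLp (fun ω => ψ (Y ω)) 2 ℙ)
    (CX : H →L[ℝ] H) (CXY : G →L[ℝ] H)
    (hCX : ∀ h h' : H, ⟪h, CX h'⟫ =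
      (∫ ω, ⟪h, φ (X ω)⟫ * ⟪h', φ (X ω)⟫ ∂ℙ)
        - (∫ ω, ⟪h, φ (X ω)⟫ ∂ℙ) * (∫ ω, ⟪h', φ (X ω)⟫ ∂ℙ))
    (hCXY : ∀ (h : H) (g : G), ⟪h, CXY g⟫ =
      (∫ ω, ⟪h, φ (X ω)⟫ * ⟪g, ψ (Y ω)⟫ ∂ℙ)
        - (∫ ω, ⟪h, φ (X ω)⟫ ∂ℙ) * (∫ ω, ⟪g, ψ (Y ω)⟫ ∂ℙ))
    (fg : G → 𝒳 → ℝ)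
    (hfg : ∀ g : G, (fun ω => fg g (X ω)) =ᵐ[ℙ]
      ℙ[(fun ω => ⟪g, ψ (Y ω)⟫) | MeasurableSpace.comap X ‹MeasurableSpace 𝒳›])
    -- Assumption C, in the form of the range inclusion
    (hran : Set.range CXY ⊆ Set.range CX)
    -- `Q` is the operator `C_X† C_XY`, via its Douglas characterisation
    (Q : G →L[ℝ] H)
    (hQ1 : CX.comp Q = CXY) (hQ2 : LinearMap.ker (Q : G →ₗ[ℝ] H) = LinearMap.ker (CXY : G →ₗ[ℝ] H))
    (hQ3 : Set.range Q ⊆ closure (Set.range CX)) :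
    (∀ (g : G) (h : H),
      (∫ ω, (⟪Q g, φ (X ω)⟫ - fg g (X ω)) * ⟪h, φ (X ω)⟫ ∂ℙ)
        - (∫ ω, ⟪Q g, φ (X ω)⟫ - fg g (X ω) ∂ℙ) * (∫ ω, ⟪h, φ (X ω)⟫ ∂ℙ) = 0) ∧
    (∀ g : G,
      (∃ (h' : H) (c' : ℝ), fg g =ᵐ[ℙ.map X] fun x => ⟪h', φ x⟫ + c') →
      ∃ c : ℝ, fg g =ᵐ[ℙ.map X] fun x => c + ⟪Q g, φ x⟫) :=
  statement10_general ℙ X hX Y φ hφ ψ hφ2 hψ2 CX CXY hCX hCXY fg hfg Q hQ1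
end

section
/- Under the CME setup with uncentred operators, the following are equivalent: (i) for each g ∈ G there exists h_g ∈ H with ⟨h_g − f_g, h⟩_{L²(P_X)} = 0 for all h ∈ H; (ii) for each g ∈ G there exists h_g ∈ H with ᵘC_X h_g = ᵘC_{XY} g; (iii) ran ᵘC_{XY} ⊆ ran ᵘC_X. -/
/-!
By the pull-out property of conditional expectation against the `σ(X)`-measurable factor
`⟨h, φ(X)⟩`, `E[⟨h, φ(X)⟩ f_g(X)] = E[⟨h, φ(X)⟩ ⟨g, ψ(Y)⟩] = ⟨h, ᵘC_XY g⟩`. Hence the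
`L²(P_X)`-pairing of the residual `⟨h_g, φ⟩ - f_g` with `⟨h, φ⟩` is `⟨h, ᵘC_X h_g - ᵘC_XY g⟩_H`,
and it vanishes for all `h` exactly when `ᵘC_X h_g = ᵘC_XY g`.
-/

open MeasureTheory
open scoped RealInnerProductSpace

section CondExp

variable {Ω : Type*} {m m₀ : MeasurableSpace Ω} {μ : Measure Ω} {f u v : Ω → ℝ}

lemma integrable_mul_of_ae_eq_condExp (hf : StronglyMeasurable[m] f)
    (hfu : Integrable (f * u) μ) (hu : Integrable u μ) (hv : v =ᵐ[μ] μ[u|m]) :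
    Integrable (fun ω => f ω * v ω) μ :=
  integrable_condExp.congr ((condExp_mul_of_stronglyMeasurable_left hf hfu hu).trans
    ((Filter.EventuallyEq.refl _ f).mul hv.symm))

lemma integral_mul_of_ae_eq_condExp (hm : m ≤ m₀) [SigmaFinite (μ.trim hm)]
    (hf : StronglyMeasurable[m] f) (hfu : Integrable (f * u) μ) (hu : Integrable u μ)
    (hv : v =ᵐ[μ] μ[u|m]) :
    ∫ ω, f ω * v ω ∂μ = ∫ ω, f ω * u ω ∂μ :=
  calc ∫ ω, f ω * v ω ∂μ = ∫ ω, μ[f * u|m] ω ∂μ :=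
        integral_congr_ae (((Filter.EventuallyEq.refl _ f).mul hv).trans
          (condExp_mul_of_stronglyMeasurable_left hf hfu hu).symm)
    _ = ∫ ω, f ω * u ω ∂μ := integral_condExp hm

end CondExp

section CME

variable {Ω 𝒳 𝒴 H G : Type*} [MeasurableSpace 𝒳] [NormedAddCommGroup H] [InnerProductSpace ℝ H]
  {X : Ω → 𝒳} {φ : 𝒳 → H}

lemma stronglyMeasurable_comap_inner_comp (hφ : StronglyMeasurable φ) (h : H) :
    StronglyMeasurable[MeasurableSpace.comap X ‹_›] (fun ω => ⟪h, φ (X ω)⟫) :=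
  ((innerSL ℝ h).continuous.comp_stronglyMeasurable hφ).comp_measurable
    (comap_measurable X)

variable [MeasurableSpace Ω] [NormedAddCommGroup G] [InnerProductSpace ℝ G]
  {ℙ : Measure Ω} [IsFiniteMeasure ℙ] {Y : Ω → 𝒴} {ψ : 𝒴 → G}

lemma integral_residual_mul_inner (hX : Measurable X) (hφ : StronglyMeasurable φ)
    (hφ2 : MemLp (fun ω => φ (X ω)) 2 ℙ) (hψ2 : MemLp (fun ω => ψ (Y ω)) 2 ℙ)
    {uCX : H →L[ℝ] H} {uCXY : G →L[ℝ] H}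
    (huCX : ∀ h h' : H, ⟪h, uCX h'⟫ = ∫ ω, ⟪h, φ (X ω)⟫ * ⟪h', φ (X ω)⟫ ∂ℙ)
    (huCXY : ∀ (h : H) (g : G), ⟪h, uCXY g⟫ = ∫ ω, ⟪h, φ (X ω)⟫ * ⟪g, ψ (Y ω)⟫ ∂ℙ)
    {f : 𝒳 → ℝ} {g : G}
    (hf : (fun ω => f (X ω)) =ᵐ[ℙ]
      ℙ[(fun ω => ⟪g, ψ (Y ω)⟫) | MeasurableSpace.comap X ‹MeasurableSpace 𝒳›]) (hg h : H) :
    ∫ ω, (⟪hg, φ (X ω)⟫ - f (X ω)) * ⟪h, φ (X ω)⟫ ∂ℙ = ⟪h, uCX hg⟫ - ⟪h, uCXY g⟫ := by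
  have hmeas := stronglyMeasurable_comap_inner_comp (X := X) hφ h
  have hprod : Integrable (fun ω => ⟪h, φ (X ω)⟫ * ⟪g, ψ (Y ω)⟫) ℙ :=
    (hφ2.const_inner h).integrable_mul (hψ2.const_inner g)
  have hψ1 := (hψ2.const_inner (𝕜 := ℝ) g).integrable one_le_two
  have hcov : Integrable (fun ω => ⟪hg, φ (X ω)⟫ * ⟪h, φ (X ω)⟫) ℙ :=
    (hφ2.const_inner hg).integrable_mul (hφ2.const_inner h)
  simp_rw [sub_mul, fun ω => mul_comm (f (X ω))]
  rw [integral_sub hcov (integrable_mul_of_ae_eq_condExp hmeas hprod hψ1 hf),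
    integral_mul_of_ae_eq_condExp hX.comap_le hmeas hprod hψ1 hf, ← huCXY, huCX]
  simp_rw [mul_comm ⟪hg, _⟫]

end CME

theorem statement11_general {Ω 𝒳 𝒴 H G : Type*}
    [MeasurableSpace Ω] [MeasurableSpace 𝒳]
    [NormedAddCommGroup H] [InnerProductSpace ℝ H]
    [NormedAddCommGroup G] [InnerProductSpace ℝ G]
    (ℙ : Measure Ω) [IsProbabilityMeasure ℙ]
    (X : Ω → 𝒳) (hX : Measurable X) (Y : Ω → 𝒴)
    (φ : 𝒳 → H) (hφ : StronglyMeasurable φ) (ψ : 𝒴 → G)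
    (hφ2 : MemLp (fun ω => φ (X ω)) 2 ℙ) (hψ2 : MemLp (fun ω => ψ (Y ω)) 2 ℙ)
    (uCX : H →L[ℝ] H) (uCXY : G →L[ℝ] H)
    (huCX : ∀ h h' : H, ⟪h, uCX h'⟫ = ∫ ω, ⟪h, φ (X ω)⟫ * ⟪h', φ (X ω)⟫ ∂ℙ)
    (huCXY : ∀ (h : H) (g : G), ⟪h, uCXY g⟫ = ∫ ω, ⟪h, φ (X ω)⟫ * ⟪g, ψ (Y ω)⟫ ∂ℙ)
    (fg : G → 𝒳 → ℝ)
    (hfg : ∀ g : G, (fun ω => fg g (X ω)) =ᵐ[ℙ]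
      ℙ[(fun ω => ⟪g, ψ (Y ω)⟫) | MeasurableSpace.comap X ‹MeasurableSpace 𝒳›]) :
    ((∀ g : G, ∃ hg : H, ∀ h : H,
        ∫ ω, (⟪hg, φ (X ω)⟫ - fg g (X ω)) * ⟪h, φ (X ω)⟫ ∂ℙ = 0) ↔
      (∀ g : G, ∃ hg : H, uCX hg = uCXY g)) ∧
    ((∀ g : G, ∃ hg : H, uCX hg = uCXY g) ↔ Set.range uCXY ⊆ Set.range uCX) := by
  have hnormal : ∀ g hg, (∀ h : H,
      ∫ ω, (⟪hg, φ (X ω)⟫ - fg g (X ω)) * ⟪h, φ (X ω)⟫ ∂ℙ = 0) ↔ uCX hg = uCXY g := by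
    intro g hg
    simp only [integral_residual_mul_inner hX hφ hφ2 hψ2 huCX huCXY (hfg g), sub_eq_zero]
    exact (ext_iff_inner_left ℝ).symm
  exact ⟨forall_congr' fun g => exists_congr (hnormal g),
    by simp only [Set.range_subset_iff, Set.mem_range]⟩

/-- In the CME setup with uncentred operators, the following are
equivalent:
(i) for each `g ∈ G` there is `h_g ∈ H` with `⟨h_g − f_g, h⟩_{L²(P_X)} = 0` for all `h ∈ H`;
(ii) for each `g ∈ G` there is `h_g ∈ H` with `ᵘC_X h_g = ᵘC_XY g`;
(iii) `ran ᵘC_XY ⊆ ran ᵘC_X`. -/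
theorem statement11 {Ω 𝒳 𝒴 H G : Type*}
    [MeasurableSpace Ω] [MeasurableSpace 𝒳] [MeasurableSpace 𝒴]
    [NormedAddCommGroup H] [InnerProductSpace ℝ H] [CompleteSpace H]
    [TopologicalSpace.SeparableSpace H]
    [NormedAddCommGroup G] [InnerProductSpace ℝ G] [CompleteSpace G]
    [TopologicalSpace.SeparableSpace G]
    (ℙ : Measure Ω) [IsProbabilityMeasure ℙ]
    (X : Ω → 𝒳) (hX : Measurable X) (Y : Ω → 𝒴) (hY : Measurable Y)
    (φ : 𝒳 → H) (hφ : StronglyMeasurable φ) (ψ : 𝒴 → G) (hψ : StronglyMeasurable ψ)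
    (hφ2 : MemLp (fun ω => φ (X ω)) 2 ℙ) (hψ2 : MemLp (fun ω => ψ (Y ω)) 2 ℙ)
    (uCX : H →L[ℝ] H) (uCXY : G →L[ℝ] H)
    (huCX : ∀ h h' : H, ⟪h, uCX h'⟫ = ∫ ω, ⟪h, φ (X ω)⟫ * ⟪h', φ (X ω)⟫ ∂ℙ)
    (huCXY : ∀ (h : H) (g : G), ⟪h, uCXY g⟫ = ∫ ω, ⟪h, φ (X ω)⟫ * ⟪g, ψ (Y ω)⟫ ∂ℙ)
    (fg : G → 𝒳 → ℝ)
    (hfg : ∀ g : G, (fun ω => fg g (X ω)) =ᵐ[ℙ]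
      ℙ[(fun ω => ⟪g, ψ (Y ω)⟫) | MeasurableSpace.comap X ‹MeasurableSpace 𝒳›]) :
    ((∀ g : G, ∃ hg : H, ∀ h : H,
        ∫ ω, (⟪hg, φ (X ω)⟫ - fg g (X ω)) * ⟪h, φ (X ω)⟫ ∂ℙ = 0) ↔
      (∀ g : G, ∃ hg : H, uCX hg = uCXY g)) ∧
    ((∀ g : G, ∃ hg : H, uCX hg = uCXY g) ↔ Set.range uCXY ⊆ Set.range uCX) :=
  statement11_general ℙ X hX Y φ hφ ψ hφ2 hψ2 uCX uCXY huCX huCXY fg hfg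
end

section
/- Under the CME setup, if the kernel k is characteristic (the kernel mean embedding Q ↦ ∫ φ dQ is injective on probability measures with integrable embedding), then the space H_C of RKHS functions modulo constants is dense in L²_C(P_X), the space of L²(P_X) functions modulo P_X-a.e. constant functions (with inner product ⟨[f₁],[f₂]⟩ = Cov[f₁(X), f₂(X)]). -/
/-!
A subspace of `L²(P)` is dense iff its orthogonal complement is trivial. If `g` is orthogonal
to every `x ↦ ⟪h, φ x⟫ + c`, then `∫ g dP = 0` and `∫ g φ dP = 0`, i.e. the finite measures
`g⁺ P` and `g⁻ P` have the same mass and the same kernel mean embedding. After normalising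
them to probability measures, characteristicness makes them equal, hence `g = 0`.
-/

open MeasureTheory
open scoped RealInnerProductSpace

theorem eq_zero_of_ofReal_eq_ofReal_neg {a : ℝ} (h : ENNReal.ofReal a = ENNReal.ofReal (-a)) :
    a = 0 := by
  rcases le_total a 0 with ha | ha
  · rw [ENNReal.ofReal_of_nonpos ha, eq_comm, ENNReal.ofReal_eq_zero] at h
    linarith
  · rw [ENNReal.ofReal_of_nonpos (neg_nonpos.mpr ha), ENNReal.ofReal_eq_zero] at h
    linarith

section

variable {𝒳 E : Type*} [MeasurableSpace 𝒳] [NormedAddCommGroup E] [NormedSpace ℝ E]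
  {P : Measure 𝒳} {φ : 𝒳 → E} {G : 𝒳 → ℝ}

theorem integrable_withDensity_ofReal_of_integrable_smul (hG : AEMeasurable G P)
    (hφ : AEStronglyMeasurable φ P)
    (hGφ : Integrable (fun x => G x • φ x) P) :
    Integrable φ (P.withDensity fun x => ENNReal.ofReal (G x)) := by
  rw [integrable_withDensity_iff_integrable_smul₀' hG.ennreal_ofReal
    (ae_of_all _ fun _ => ENNReal.ofReal_lt_top)]
  refine hGφ.mono (hG.ennreal_ofReal.ennreal_toReal.aestronglyMeasurable.smul hφ)
    (ae_of_all _ fun x => ?_)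
  simp only [ENNReal.toReal_ofReal', norm_smul, Real.norm_eq_abs]
  gcongr ?_ * _
  rw [abs_of_nonneg (le_max_right _ _)]
  exact max_le (le_abs_self _) (abs_nonneg _)

theorem integral_withDensity_ofReal_sub_integral_withDensity_ofReal_neg
    (hG : AEMeasurable G P) (hφ : AEStronglyMeasurable φ P)
    (hGφ : Integrable (fun x => G x • φ x) P) :
    ∫ x, φ x ∂P.withDensity (fun x => ENNReal.ofReal (G x))
      - ∫ x, φ x ∂P.withDensity (fun x => ENNReal.ofReal (-G x)) = ∫ x, G x • φ x ∂P := by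
  have hG' : AEMeasurable (fun x => -G x) P := hG.neg
  have hfin : ∀ (f : 𝒳 → ℝ), ∀ᵐ x ∂P, ENNReal.ofReal (f x) < ⊤ :=
    fun _ => ae_of_all _ fun _ => ENNReal.ofReal_lt_top
  have hpos := integrable_withDensity_ofReal_of_integrable_smul hG hφ hGφ
  have hneg :=
    integrable_withDensity_ofReal_of_integrable_smul hG' hφ (by simpa using hGφ.neg)
  rw [integrable_withDensity_iff_integrable_smul₀' hG.ennreal_ofReal (hfin G)] at hpos
  rw [integrable_withDensity_iff_integrable_smul₀' hG'.ennreal_ofReal (hfin (-G))] at hneg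
  rw [integral_withDensity_eq_integral_toReal_smul₀ hG.ennreal_ofReal (hfin G),
    integral_withDensity_eq_integral_toReal_smul₀ hG'.ennreal_ofReal (hfin (-G)),
    ← integral_sub hpos hneg]
  simp only [ENNReal.toReal_ofReal', ← sub_smul, max_zero_sub_max_neg_zero_eq_self]

def MeanEmbeddingInjective (φ : 𝒳 → E) : Prop :=
  ∀ Q₁ Q₂ : Measure 𝒳, IsProbabilityMeasure Q₁ → IsProbabilityMeasure Q₂ →
    Integrable φ Q₁ → Integrable φ Q₂ → (∫ x, φ x ∂Q₁) = (∫ x, φ x ∂Q₂) → Q₁ = Q₂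

namespace MeanEmbeddingInjective

theorem eq_of_measure_univ_eq (hchar : MeanEmbeddingInjective φ) {μ₁ μ₂ : Measure 𝒳}
    [IsFiniteMeasure μ₁] [IsFiniteMeasure μ₂]
    (huniv : μ₁ Set.univ = μ₂ Set.univ) (h₁ : Integrable φ μ₁) (h₂ : Integrable φ μ₂)
    (hmean : ∫ x, φ x ∂μ₁ = ∫ x, φ x ∂μ₂) : μ₁ = μ₂ := by
  rcases eq_zero_or_neZero μ₁ with rfl | _
  · exact (Measure.measure_univ_eq_zero.mp huniv.symm).symm
  have : NeZero μ₂ := ⟨by rw [Ne, ← Measure.measure_univ_eq_zero, ← huniv]; exact NeZero.ne _⟩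
  have hinv : (μ₁ Set.univ)⁻¹ ≠ ⊤ := ENNReal.inv_ne_top.mpr (NeZero.ne _)
  have hnorm : (μ₁ Set.univ)⁻¹ • μ₁ = (μ₁ Set.univ)⁻¹ • μ₂ := by
    refine hchar _ _ inferInstance (huniv ▸ inferInstance) (h₁.smul_measure hinv)
      (h₂.smul_measure hinv) ?_
    rw [integral_smul_measure, integral_smul_measure, hmean]
  simpa [smul_smul, ENNReal.mul_inv_cancel (NeZero.ne _) (measure_ne_top _ _)] using
    congrArg ((μ₁ Set.univ) • ·) hnorm

theorem ae_eq_zero_of_integral_smul_eq_zero (hchar : MeanEmbeddingInjective φ)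
    (hG : Integrable G P) (hφ : AEStronglyMeasurable φ P)
    (hGφ : Integrable (fun x => G x • φ x) P) (hG0 : ∫ x, G x ∂P = 0)
    (hGφ0 : ∫ x, G x • φ x ∂P = 0) : G =ᵐ[P] 0 := by
  have hG' : Integrable (fun x => -G x) P := hG.neg
  have := isFiniteMeasure_withDensity_ofReal hG.2
  have := isFiniteMeasure_withDensity_ofReal hG'.2
  -- with `φ = 1` the same identity compares the masses of the two measures
  have hmass := integral_withDensity_ofReal_sub_integral_withDensity_ofReal_neg
    hG.aemeasurable aestronglyMeasurable_const (by simpa using hG) (φ := fun _ => (1 : ℝ))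
  have hmean := integral_withDensity_ofReal_sub_integral_withDensity_ofReal_neg
    hG.aemeasurable hφ hGφ
  simp only [integral_const, smul_eq_mul, mul_one, hG0, sub_eq_zero, measureReal_def] at hmass
  rw [hGφ0, sub_eq_zero] at hmean
  have hsplit : P.withDensity (fun x => ENNReal.ofReal (G x))
      = P.withDensity (fun x => ENNReal.ofReal (-G x)) :=
    hchar.eq_of_measure_univ_eq
      ((ENNReal.toReal_eq_toReal_iff' (measure_ne_top _ _) (measure_ne_top _ _)).mp hmass)
      (integrable_withDensity_ofReal_of_integrable_smul hG.aemeasurable hφ hGφ)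
      (integrable_withDensity_ofReal_of_integrable_smul hG'.aemeasurable hφ
        (by simpa using hGφ.neg)) hmean
  rw [withDensity_eq_iff hG.aemeasurable.ennreal_ofReal hG'.aemeasurable.ennreal_ofReal
    hG.lintegral_lt_top.ne] at hsplit
  filter_upwards [hsplit] with x hx using eq_zero_of_ofReal_eq_ofReal_neg hx

end MeanEmbeddingInjective

end

section

variable {𝒳 H : Type*} [MeasurableSpace 𝒳] [NormedAddCommGroup H] [InnerProductSpace ℝ H]
  {P : Measure 𝒳} {φ : 𝒳 → H}

variable (P φ) in
def affineFeatureSubmodule : Submodule ℝ (Lp ℝ 2 P) where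
  carrier := {F | ∃ (h : H) (c : ℝ), (F : 𝒳 → ℝ) =ᵐ[P] fun x => ⟪h, φ x⟫ + c}
  add_mem' := by
    rintro F₁ F₂ ⟨h₁, c₁, hF₁⟩ ⟨h₂, c₂, hF₂⟩
    refine ⟨h₁ + h₂, c₁ + c₂, ?_⟩
    filter_upwards [Lp.coeFn_add F₁ F₂, hF₁, hF₂] with x hx hx₁ hx₂
    rw [hx, Pi.add_apply, hx₁, hx₂, inner_add_left]
    ring
  zero_mem' := ⟨0, 0, (Lp.coeFn_zero ℝ 2 P).trans (ae_of_all _ fun x => by simp)⟩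
  smul_mem' := by
    rintro a F ⟨h, c, hF⟩
    refine ⟨a • h, a * c, ?_⟩
    filter_upwards [Lp.coeFn_smul a F, hF] with x hx hxF
    rw [hx, Pi.smul_apply, hxF, smul_eq_mul, real_inner_smul_left]
    ring

theorem integral_mul_eq_zero_of_mem_orthogonal [IsFiniteMeasure P] (hφ : MemLp φ 2 P)
    {g : Lp ℝ 2 P} (hg : g ∈ (affineFeatureSubmodule P φ)ᗮ) (h : H) (c : ℝ) :
    ∫ x, (⟪h, φ x⟫ + c) * g x ∂P = 0 := by
  have hmem : MemLp (fun x => ⟪h, φ x⟫ + c) 2 P :=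
    (hφ.const_inner h).add (g := fun _ => c) (memLp_const c)
  have horth := (Submodule.mem_orthogonal _ g).mp hg _ ⟨h, c, hmem.coeFn_toLp⟩
  rw [L2.inner_def] at horth
  rw [← horth]
  refine integral_congr_ae ?_
  filter_upwards [hmem.coeFn_toLp] with x hx
  simp [hx, mul_comm]

theorem MeanEmbeddingInjective.eq_zero_of_mem_orthogonal [CompleteSpace H] [IsFiniteMeasure P]
    (hchar : MeanEmbeddingInjective φ) (hφ : MemLp φ 2 P) {g : Lp ℝ 2 P}
    (hg : g ∈ (affineFeatureSubmodule P φ)ᗮ) : g = 0 := by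
  have hgφ : Integrable (fun x => g x • φ x) P :=
    memLp_one_iff_integrable.mp (hφ.smul (Lp.memLp g))
  have hg0 : ∫ x, g x ∂P = 0 := by
    simpa using integral_mul_eq_zero_of_mem_orthogonal hφ hg 0 1
  have hgφ0 : ∫ x, g x • φ x ∂P = 0 := by
    refine integral_eq_zero_of_forall_integral_inner_eq_zero ℝ _ hgφ fun h => ?_
    simpa [real_inner_smul_right, mul_comm] using
      integral_mul_eq_zero_of_mem_orthogonal hφ hg h 0
  exact Lp.eq_zero_iff_ae_eq_zero.mpr <| hchar.ae_eq_zero_of_integral_smul_eq_zero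
    (Lp.memLp g |>.integrable one_le_two) hφ.1 hgφ hg0 hgφ0

end

theorem statement13_general {𝒳 H : Type*} [MeasurableSpace 𝒳]
    [NormedAddCommGroup H] [InnerProductSpace ℝ H] [CompleteSpace H]
    (P : Measure 𝒳) [IsProbabilityMeasure P]
    (φ : 𝒳 → H)
    (hφ2 : MemLp φ 2 P)
    -- the kernel is characteristic
    (hchar : ∀ Q₁ Q₂ : Measure 𝒳, IsProbabilityMeasure Q₁ → IsProbabilityMeasure Q₂ →
      Integrable φ Q₁ → Integrable φ Q₂ →
      (∫ x, φ x ∂Q₁) = (∫ x, φ x ∂Q₂) → Q₁ = Q₂) :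
    Dense {F : Lp ℝ 2 P | ∃ (h : H) (c : ℝ), (F : 𝒳 → ℝ) =ᵐ[P] fun x => ⟪h, φ x⟫ + c} := by
  change Dense (affineFeatureSubmodule P φ : Set (Lp ℝ 2 P))
  rw [Submodule.dense_iff_topologicalClosure_eq_top, Submodule.topologicalClosure_eq_top_iff,
    Submodule.eq_bot_iff]
  exact fun g hg => MeanEmbeddingInjective.eq_zero_of_mem_orthogonal hchar hφ2 hg

/-- If the kernel `k` is characteristic (the kernel mean embedding
`Q ↦ ∫ φ dQ` is injective on probability measures with integrable embedding), then `H_C`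
is dense in `L²_C(P_X)`.  Density of the quotient `H_C = H/constants` in
`L²_C(P_X) = L²(P_X)/constants` (whose norm is `‖[f]‖² = Var[f(X)]`) is expressed
equivalently: the set of (classes of) functions of the form `x ↦ ⟪h, φ x⟫ + c` with
`h ∈ H`, `c ∈ ℝ`, is dense in `L²(P_X)`. -/
theorem statement13 {𝒳 H : Type*} [MeasurableSpace 𝒳]
    [NormedAddCommGroup H] [InnerProductSpace ℝ H] [CompleteSpace H]
    [TopologicalSpace.SeparableSpace H]
    (P : Measure 𝒳) [IsProbabilityMeasure P]
    (φ : 𝒳 → H) (hφ : StronglyMeasurable φ)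
    (hφ2 : MemLp φ 2 P)
    -- the kernel is characteristic
    (hchar : ∀ Q₁ Q₂ : Measure 𝒳, IsProbabilityMeasure Q₁ → IsProbabilityMeasure Q₂ →
      Integrable φ Q₁ → Integrable φ Q₂ →
      (∫ x, φ x ∂Q₁) = (∫ x, φ x ∂Q₂) → Q₁ = Q₂) :
    Dense {F : Lp ℝ 2 P | ∃ (h : H) (c : ℝ), (F : 𝒳 → ℝ) =ᵐ[P] fun x => ⟪h, φ x⟫ + c} :=
  statement13_general P φ hφ2 hchar
end

section
/- Let C_X be a self-adjoint non-negative trace-class operator on a separable Hilbert space H with eigenbasis (h_n), let P^(n) be the orthogonal projection onto G ⊕ span{h_1,…,h_n} in F = G ⊕ H, and let C be a positive trace-class operator on F with blocks [[C_Y, C_{YX}],[C_{XY}, C_X]]. Then for C^(n) = P^(n) C P^(n) with blocks C_{XY}^(n), C_X^(n), one has ran C_{XY}^(n) ⊆ ran C_X^(n); in particular C_X^(n)† C_{XY}^(n) g ∈ H is well defined for every g ∈ G. -/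
/-!
In the eigenbasis `(b i)`, `C_X^(n)` is diagonal with entries `σ 0, …, σ (n-1)`, so
`P_n C_XY g = ∑ i < n, ⟪b i, C_XY g⟫ b i` is `C_X^(n) x` for
`x = ∑ i < n, (⟪b i, C_XY g⟫ / σ i) b i` as soon as `⟪b i, C_XY g⟫ = 0` whenever `σ i = 0`.
That holds because `⟪·, C ·⟫` is a positive semidefinite form:
`⟪in_H b i, C (in_H b i)⟫ = ⟪b i, C_X b i⟫ = σ i = 0` forces `in_H b i` to be `C`-orthogonal to
everything, in particular to `in_G g`.
-/

noncomputable section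
open scoped RealInnerProductSpace

variable (G H : Type*)
  [NormedAddCommGroup G] [InnerProductSpace ℝ G] [CompleteSpace G]
  [NormedAddCommGroup H] [InnerProductSpace ℝ H] [CompleteSpace H]

/-- The quadratic `t ↦ ⟪u + t v, C (u + t v)⟫ = 2 t ⟪u, C v⟫ + t² ⟪v, C v⟫` is non-negative, so
its discriminant `4 ⟪u, C v⟫²` is not positive. -/
theorem ContinuousLinearMap.IsPositive.inner_apply_eq_zero_of_inner_apply_self_eq_zero
    {E : Type*} [NormedAddCommGroup E] [InnerProductSpace ℝ E] {C : E →L[ℝ] E}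
    (hC : C.IsPositive) {u : E} (hu : ⟪u, C u⟫ = 0) (v : E) : ⟪u, C v⟫ = 0 := by
  have hquad : ∀ t : ℝ, 0 ≤ ⟪v, C v⟫ * (t * t) + 2 * ⟪u, C v⟫ * t + 0 := fun t => by
    have h := hC.re_inner_nonneg_right (u + t • v)
    simp only [RCLike.re_to_real, map_add, map_smul, inner_add_left, inner_add_right,
      real_inner_smul_left, real_inner_smul_right, hu, ← hC.inner_left_eq_inner_right v u,
      real_inner_comm u (C v)] at h
    linarith
  have hdisc := discrim_le_zero hquad
  rw [discrim] at hdisc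
  nlinarith [sq_nonneg ⟪u, C v⟫]

theorem Orthonormal.sum_inner_smul_sum_smul {𝕜 E ι : Type*} [RCLike 𝕜] [NormedAddCommGroup E]
    [InnerProductSpace 𝕜 E] {v : ι → E} (hv : Orthonormal 𝕜 v) (l : ι → 𝕜) (s : Finset ι) :
    ∑ i ∈ s, inner 𝕜 (v i) (∑ j ∈ s, l j • v j) • v i = ∑ i ∈ s, l i • v i :=
  Finset.sum_congr rfl fun _ hi => by rw [hv.inner_right_sum l hi]

/-- The junk value `c i / 0 = 0` is harmless because `c i = 0` whenever `σ i = 0`. -/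
theorem LinearMap.map_sum_div_smul_eq_sum_smul {𝕜 E ι : Type*} [Field 𝕜] [AddCommGroup E]
    [Module 𝕜 E] (T : E →ₗ[𝕜] E) {v : ι → E} {σ : ι → 𝕜} (hT : ∀ i, T (v i) = σ i • v i)
    (s : Finset ι) {c : ι → 𝕜} (hc : ∀ i ∈ s, σ i = 0 → c i = 0) :
    T (∑ i ∈ s, (c i / σ i) • v i) = ∑ i ∈ s, c i • v i := by
  rw [map_sum]
  refine Finset.sum_congr rfl fun i hi => ?_
  rw [map_smul, hT, smul_smul]
  rcases eq_or_ne (σ i) 0 with hσ | hσ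
  · simp [hσ, hc i hi hσ]
  · rw [div_mul_cancel₀ _ hσ]

theorem inner_inH_left {G H : Type*} [NormedAddCommGroup G] [InnerProductSpace ℝ G]
    [NormedAddCommGroup H] [InnerProductSpace ℝ H] (h : H) (z : DirSum G H) :
    ⟪inH G H h, z⟫ = ⟪h, prH G H z⟫ := by
  simp [inH, prH, WithLp.prod_inner_apply]

/-- `ker C_X ⊥ ran (pr_H ∘ C)`: the consequence of Baker's factorization
`C_XY = C_X^{1/2} V C_Y^{1/2}` that the range inclusion needs. -/
theorem inner_prH_apply_eq_zero_of_block_apply_eq_zero {G H : Type*} [NormedAddCommGroup G]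
    [InnerProductSpace ℝ G] [NormedAddCommGroup H] [InnerProductSpace ℝ H]
    {C : DirSum G H →L[ℝ] DirSum G H}
    (hC : C.IsPositive) {h : H} (hh : (prH G H) (C (inH G H h)) = 0) (z : DirSum G H) :
    ⟪h, prH G H (C z)⟫ = 0 := by
  rw [← inner_inH_left]
  refine hC.inner_apply_eq_zero_of_inner_apply_self_eq_zero ?_ z
  rw [inner_inH_left, hh, inner_zero_right]

theorem statement17
    (C : DirSum G H →L[ℝ] DirSum G H)
    (hsa : IsSelfAdjoint C) (hpos : ∀ x : DirSum G H, 0 ≤ ⟪x, C x⟫)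
    -- `(b n)` is an orthonormal eigenbasis of the block `C_X`, with eigenvalues `σ`
    (b : HilbertBasis ℕ ℝ H) (σ : ℕ → ℝ)
    (heig : ∀ i, ((prH G H).comp (C.comp (inH G H))) (b i) = σ i • b i)
    -- `P n` is the orthogonal projection onto `span {b 0, …, b (n-1)}`
    (P : ℕ → H →L[ℝ] H)
    (hP : ∀ (n : ℕ) (x : H), P n x = ∑ i ∈ Finset.range n, ⟪b i, x⟫ • b i) :
    ∀ n : ℕ,
      Set.range ((P n).comp ((prH G H).comp (C.comp (inG G H))))
        ⊆ Set.range ((P n).comp (((prH G H).comp (C.comp (inH G H))).comp (P n))) := by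
  have hC : C.IsPositive :=
    ⟨hsa.isSymmetric, fun x => by simpa [C.reApplyInnerSelf_apply, real_inner_comm] using hpos x⟩
  set CX := (prH G H).comp (C.comp (inH G H))
  intro n
  rintro _ ⟨g, rfl⟩
  set y := prH G H (C (inG G H g))
  have hy : ∀ i ∈ Finset.range n, σ i = 0 → ⟪b i, y⟫ = 0 := fun i _ hσ =>
    inner_prH_apply_eq_zero_of_block_apply_eq_zero hC (by simpa [CX, hσ] using heig i) _
  refine ⟨∑ i ∈ Finset.range n, (⟪b i, y⟫ / σ i) • b i, ?_⟩
  simp only [ContinuousLinearMap.comp_apply, hP, b.orthonormal.sum_inner_smul_sum_smul]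
  rw [← ContinuousLinearMap.coe_coe CX,
    (CX : H →ₗ[ℝ] H).map_sum_div_smul_eq_sum_smul heig _ hy,
    b.orthonormal.sum_inner_smul_sum_smul]
end
end
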